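/- arXiv:1711.11061 — 3 statements merged into one kernel-verified Lean document; each statement's English description precedes it below -/
import Mathlib

section
/- If P is a d-dimensional k-template and X is an infinite set, then the chromatic number of the template hypergraph L(X^d, P) equals |X|^{-(e(P) − 1)}. -/
/-!
Let `e = e(P)` and `λ = |X|^{-(e-1)}`, so that `|X| ≤ λ^{+(e-1)}` and `μ^{+(e-1)} < |X|` for every
`μ < λ`.

Upper bound: by induction on `t`, for a set `S` of size at most `λ^{+t}` the points of `S^d` can be
coloured with `λ` colours, each colour carrying a list of at most `t` coordinates, so that two points
of the same colour that agree on its list are equal. For the step, well-order `S` with initial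
segments of size at most `λ^{+(t-1)}`, and colour `u` by a coordinate `m` where `u` is largest,
followed by the colour of `u` inside the initial segment ending at `u m`. For `t = e - 1` the list is
not a distinguisher of `P`, so two distinct points of a homomorphic copy of `P` agree on it, and the
copy is not monochromatic.

Lower bound: with `μ < λ` colours, a product Ramsey argument over a minimal distinguisher `I`
(pigeonhole on one coordinate at a time, using `μ^{+(|I|-1)} < |X|`, or finite pigeonhole when `μ` is
finite) gives a monochromatic box `∏_{i ∈ I} B_i` with `|B_i| = |P|`. Since `I` distinguishes `P`,
`P` maps homomorphically and injectively into that box (other coordinates fixed), which yields a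
monochromatic edge.
-/

/-- `Q` is a homomorphic image of the `d`-dimensional template `P`: there is an injective
map `f` from `P` onto `Q` such that whenever `x, y ∈ P` agree in coordinate `i`, so do
`f x` and `f y`. -/
def IsHomImage {d : ℕ} {α β : Type} (P : Set (Fin d → α)) (Q : Set (Fin d → β)) : Prop :=
  ∃ f : (Fin d → α) → (Fin d → β), Set.InjOn f P ∧ Q = f '' P ∧
    ∀ x ∈ P, ∀ y ∈ P, ∀ i : Fin d, x i = y i → f x i = f y i

/-- The edge set of the multi-template hypergraph `L(V^d, 𝓟)`: the edges are those subsets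
of `V^d` that are homomorphic images of some template `P ∈ 𝓟`. -/
def multiTemplateEdges {d : ℕ} {α : Type} (V : Type) (𝓟 : Set (Set (Fin d → α))) :
    Set (Set (Fin d → V)) :=
  {Q | ∃ P ∈ 𝓟, IsHomImage P Q}

/-- `φ` is a proper coloring of the hypergraph with edge set `E`: no edge is monochromatic. -/
def IsProperColoring {V C : Type*} (E : Set (Set V)) (φ : V → C) : Prop :=
  ∀ s ∈ E, ∃ x ∈ s, ∃ y ∈ s, φ x ≠ φ y

/-- The chromatic number of the hypergraph with vertex set `V` and edge set `E`: the least
cardinal `κ` such that there is a proper coloring with `κ` colors. -/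
noncomputable def chrNum {V : Type} (E : Set (Set V)) : Cardinal :=
  sInf {κ : Cardinal | ∃ (C : Type) (φ : V → C), Cardinal.mk C = κ ∧ IsProperColoring E φ}

/-- `κ⁺ᵈ`, the `d`-fold cardinal successor of `κ`. -/
noncomputable def cardPlus (κ : Cardinal) (d : ℕ) : Cardinal := (Order.succ)^[d] κ

/-- `κ⁻ᵈ`, the least cardinal `μ` with `μ⁺ᵈ ≥ κ`. -/
noncomputable def cardMinus (κ : Cardinal) (d : ℕ) : Cardinal :=
  sInf {μ : Cardinal | κ ≤ cardPlus μ d}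

/-- The induced subhypergraph `H[X]`: vertex set `X`, edges the edges of `H` contained
in `X`. -/
def inducedEdges {V : Type} (E : Set (Set V)) (X : Set V) : Set (Set X) :=
  {s | (Subtype.val '' s) ∈ E}

/-- `I` is a distinguisher for the template `P`: any two distinct elements of `P` differ in
some coordinate in `I`. -/
def IsDistinguisher {d : ℕ} {α : Type} (P : Set (Fin d → α)) (I : Set (Fin d)) : Prop :=
  ∀ x ∈ P, ∀ y ∈ P, x ≠ y → ∃ i ∈ I, x i ≠ y i

/-- `e(P)`, the least cardinality of a distinguisher for the template `P`. -/
noncomputable def eTemplate {d : ℕ} {α : Type} (P : Set (Fin d → α)) : ℕ :=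
  sInf {m : ℕ | ∃ I : Set (Fin d), I.ncard = m ∧ IsDistinguisher P I}

open Cardinal Set Function

theorem cardPlus_succ (κ : Cardinal) (n : ℕ) :
    cardPlus κ (n + 1) = Order.succ (cardPlus κ n) :=
  iterate_succ_apply' _ n κ

theorem le_cardPlus (κ : Cardinal) (n : ℕ) : κ ≤ cardPlus κ n :=
  Order.le_succ_iterate n κ

theorem cardPlus_natCast (m n : ℕ) : cardPlus (m : Cardinal) n = ((m + n : ℕ) : Cardinal) := by
  induction n with
  | zero => rfl
  | succ n ih => rw [cardPlus_succ, ih, succ_natCast, ← add_assoc, Nat.cast_add_one]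

theorem le_cardPlus_cardMinus (κ : Cardinal) (n : ℕ) : κ ≤ cardPlus (cardMinus κ n) n :=
  csInf_mem (s := {μ | κ ≤ cardPlus μ n}) ⟨κ, le_cardPlus κ n⟩

theorem cardMinus_le {κ μ : Cardinal} {n : ℕ} (h : κ ≤ cardPlus μ n) : cardMinus κ n ≤ μ :=
  csInf_le' h

theorem aleph0_le_cardMinus {κ : Cardinal} (hκ : ℵ₀ ≤ κ) (n : ℕ) : ℵ₀ ≤ cardMinus κ n := by
  by_contra! h
  obtain ⟨m, hm⟩ := lt_aleph0.mp h
  have := le_cardPlus_cardMinus κ n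
  rw [hm, cardPlus_natCast] at this
  exact (hκ.trans this).not_gt natCast_lt_aleph0

theorem chrNum_le_mk {V C : Type} {E : Set (Set V)} {φ : V → C} (hφ : IsProperColoring E φ) :
    chrNum E ≤ #C :=
  csInf_le' ⟨C, φ, rfl, hφ⟩

theorem le_chrNum {V : Type} {E : Set (Set V)} {κ : Cardinal}
    (hE : ∃ (C : Type) (φ : V → C), IsProperColoring E φ)
    (h : ∀ (C : Type) (φ : V → C), IsProperColoring E φ → κ ≤ #C) : κ ≤ chrNum E := by
  obtain ⟨C, φ, hφ⟩ := hE
  exact le_csInf ⟨_, C, φ, rfl, hφ⟩ fun _ ⟨C, φ, hC, hφ⟩ => hC ▸ h C φ hφ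

section Distinguishers

variable {d : ℕ} {α : Type} {P : Set (Fin d → α)}

theorem exists_isDistinguisher_ncard_eq (P : Set (Fin d → α)) :
    ∃ I : Set (Fin d), I.ncard = eTemplate P ∧ IsDistinguisher P I :=
  Nat.sInf_mem (s := {m | ∃ I : Set (Fin d), I.ncard = m ∧ IsDistinguisher P I})
    ⟨_, univ, rfl, fun _ _ _ _ hxy => let ⟨i, hi⟩ := ne_iff.mp hxy; ⟨i, trivial, hi⟩⟩

theorem exists_ne_forall_eq_of_ncard_lt {I : Set (Fin d)} (h : I.ncard < eTemplate P) :
    ∃ x ∈ P, ∃ y ∈ P, x ≠ y ∧ ∀ i ∈ I, x i = y i := by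
  have hI : ¬IsDistinguisher P I := fun hI => h.not_ge (Nat.sInf_le ⟨I, rfl, hI⟩)
  simpa [IsDistinguisher] using hI

theorem eTemplate_pos (hP : P.Nontrivial) : 0 < eTemplate P := by
  obtain ⟨I, hIe, hI⟩ := exists_isDistinguisher_ncard_eq P
  obtain ⟨x, hx, y, hy, hxy⟩ := hP
  obtain ⟨i, hi, -⟩ := hI x hx y hy hxy
  exact hIe ▸ (ncard_pos (toFinite I)).mpr ⟨i, hi⟩

end Distinguishers

section Separating

variable {ι Y L : Type}

def IsSeparatingOn (t : ℕ) (S : Set Y) (c : (ι → Y) → List ι × L) : Prop :=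
  (∀ u ∈ univ.pi (fun _ => S), (c u).1.length ≤ t) ∧
    ∀ u ∈ univ.pi (fun _ => S), ∀ v ∈ univ.pi (fun _ => S),
      c u = c v → (∀ i ∈ (c u).1, u i = v i) → u = v

theorem exists_rank_card_le {S : Set Y} {κ : Cardinal} (hκ : ℵ₀ ≤ κ)
    (hS : #S ≤ Order.succ κ) : ∃ ρ : Y → Ordinal.{0}, ∀ M ∈ S, #{y ∈ S | ρ y ≤ ρ M} ≤ κ := by
  classical
  obtain ⟨r, _, hr⟩ := exists_ord_eq S
  let ρ : Y → Ordinal.{0} := fun y => if h : y ∈ S then Ordinal.typein r ⟨y, h⟩ else 0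
  refine ⟨ρ, fun M hM => ?_⟩
  have hsub : {y ∈ S | ρ y ≤ ρ M} ⊆ insert M (Subtype.val '' {y : S | r y ⟨M, hM⟩}) := by
    rintro y ⟨hy, hle⟩
    simp only [ρ, dif_pos hy, dif_pos hM, Ordinal.typein_le_typein] at hle
    rcases trichotomous_of r ⟨y, hy⟩ ⟨M, hM⟩ with h | h | h
    · exact Or.inr ⟨_, h, rfl⟩
    · exact Or.inl (congrArg Subtype.val h)
    · exact absurd h hle
  have hlt : #{y : S // r y ⟨M, hM⟩} < Order.succ κ :=
    (Ordinal.card_typein (r := r) ⟨M, hM⟩ ▸ card_typein_lt _ hr).trans_le hS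
  calc _ ≤ #(insert M (Subtype.val '' {y : S | r y ⟨M, hM⟩}) : Set Y) := mk_le_mk_of_subset hsub
    _ ≤ #{y : S // r y ⟨M, hM⟩} + 1 := mk_insert_le.trans (by gcongr; exact mk_image_le)
    _ ≤ κ + 1 := by gcongr; exact Order.lt_succ_iff.mp hlt
    _ = κ := add_one_eq hκ

theorem exists_isSeparatingOn_zero [Finite ι] (hL : ℵ₀ ≤ #L) {S : Set Y} (hS : #S ≤ #L) :
    ∃ c : (ι → Y) → List ι × L, IsSeparatingOn 0 S c := by
  have : Nonempty L := mk_ne_zero_iff.mp (aleph0_pos.trans_le hL).ne'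
  obtain ⟨g, hg⟩ : ∃ g : (ι → Y) → L, InjOn g (univ.pi fun _ => S) := by
    rw [exists_injOn_iff_injective]
    have hpi : #(univ.pi fun _ : ι => S) ≤ #L :=
      calc #(univ.pi fun _ : ι => S) = #S ^ #ι := by rw [power_def, mk_congr (Equiv.Set.univPi _)]
        _ ≤ #L ^ #ι := power_le_power_right hS
        _ ≤ #L := pow_le hL (lt_aleph0_of_finite ι)
    obtain ⟨e⟩ := hpi
    exact ⟨e, e.injective⟩
  refine ⟨fun u => ([], g u), fun _ _ => le_rfl, fun u hu v hv huv _ => hg hu hv ?_⟩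
  exact congrArg Prod.snd huv

theorem exists_isSeparatingOn_succ [Finite ι] [Nonempty ι] [Nonempty L] {S : Set Y}
    (ρ : Y → Ordinal.{0}) {t : ℕ}
    (h : ∀ M ∈ S, ∃ c : (ι → Y) → List ι × L, IsSeparatingOn t {y ∈ S | ρ y ≤ ρ M} c) :
    ∃ c : (ι → Y) → List ι × L, IsSeparatingOn (t + 1) S c := by
  choose! c hc using h
  choose m hm using fun u : ι → Y => Finite.exists_max fun i => ρ (u i)
  have hpi : ∀ u ∈ univ.pi (fun _ => S), u ∈ univ.pi fun _ => {y ∈ S | ρ y ≤ ρ (u (m u))} :=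
    fun u hu i _ => ⟨hu i trivial, hm u i⟩
  refine ⟨fun u => (m u :: (c (u (m u)) u).1, (c (u (m u)) u).2), fun u hu => ?_,
    fun u hu v hv huv hagree => ?_⟩
  · simpa using (hc _ (hu _ trivial)).1 u (hpi u hu)
  · simp only [Prod.mk.injEq, List.cons.injEq] at huv
    obtain ⟨⟨hmuv, hl⟩, ha⟩ := huv
    have hM : u (m u) = v (m v) := hmuv ▸ hagree _ List.mem_cons_self
    refine (hc _ (hu _ trivial)).2 u (hpi u hu) v (hM ▸ hpi v hv) ?_
      fun i hi => hagree i (List.mem_cons_of_mem _ hi)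
    exact (Prod.ext hl ha).trans (congrArg (c · v) hM).symm

theorem exists_isSeparatingOn [Finite ι] [Nonempty ι] (hL : ℵ₀ ≤ #L) {t : ℕ} {S : Set Y}
    (hS : #S ≤ cardPlus #L t) : ∃ c : (ι → Y) → List ι × L, IsSeparatingOn t S c := by
  have : Nonempty L := mk_ne_zero_iff.mp (aleph0_pos.trans_le hL).ne'
  induction t generalizing S with
  | zero => exact exists_isSeparatingOn_zero hL hS
  | succ t ih =>
    rw [cardPlus_succ] at hS
    obtain ⟨ρ, hρ⟩ := exists_rank_card_le (hL.trans (le_cardPlus _ t)) hS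
    exact exists_isSeparatingOn_succ ρ fun M hM => ih (hρ M hM)

end Separating

theorem IsSeparatingOn.isProperColoring {d t : ℕ} {α X L : Type} {P : Set (Fin d → α)}
    (ht : t < eTemplate P) {c : (Fin d → X) → List (Fin d) × L} (hc : IsSeparatingOn t univ c) :
    IsProperColoring (multiTemplateEdges X {P}) c := by
  rintro _ ⟨P', hP', f, hf, rfl, hhom⟩
  subst P'
  by_contra! hmono
  obtain ⟨x₀, hx₀, -⟩ := exists_ne_forall_eq_of_ncard_lt (P := P) (I := ∅) (by simpa using ht.pos)
  set l := (c (f x₀)).1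
  have hl : {i | i ∈ l}.ncard < eTemplate P :=
    calc {i | i ∈ l}.ncard = l.toFinset.card := by rw [← ncard_coe_finset]; simp
      _ ≤ l.length := List.toFinset_card_le l
      _ ≤ t := hc.1 _ fun _ _ => trivial
      _ < eTemplate P := ht
  obtain ⟨x, hx, y, hy, hxy, hagree⟩ := exists_ne_forall_eq_of_ncard_lt hl
  have hcx : c (f x) = c (f x₀) := hmono _ (mem_image_of_mem f hx) _ (mem_image_of_mem f hx₀)
  refine hxy (hf hx hy (hc.2 _ (fun _ _ => trivial) _ (fun _ _ => trivial)
    (hmono _ (mem_image_of_mem f hx) _ (mem_image_of_mem f hy)) fun i hi => ?_))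
  exact hhom x hx y hy i (hagree i (by rwa [hcx] at hi))

theorem exists_isProperColoring_mk_le {d : ℕ} {α X : Type} [Infinite X] {P : Set (Fin d → α)}
    (hP : P.Nontrivial) : ∃ (C : Type) (φ : (Fin d → X) → C),
      #C ≤ cardMinus #X (eTemplate P - 1) ∧ IsProperColoring (multiTemplateEdges X {P}) φ := by
  set κ := cardMinus #X (eTemplate P - 1)
  have hκ : ℵ₀ ≤ κ := aleph0_le_cardMinus (aleph0_le_mk X) _
  have : Nonempty (Fin d) :=
    let ⟨_, _, _, _, hxy⟩ := hP; let ⟨i, _⟩ := ne_iff.mp hxy; ⟨i⟩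
  obtain ⟨c, hc⟩ := exists_isSeparatingOn (ι := Fin d) (L := κ.out) (S := (univ : Set X))
    (by rwa [mk_out]) (by rw [mk_univ, mk_out]; exact le_cardPlus_cardMinus _ _)
  refine ⟨_, c, ?_, hc.isProperColoring (Nat.sub_lt (eTemplate_pos hP) one_pos)⟩
  calc #(List (Fin d) × κ.out) = #(List (Fin d)) * κ := by rw [mk_prod, lift_id, lift_id, mk_out]
    _ ≤ ℵ₀ * κ := by gcongr; exact mk_le_aleph0
    _ = κ := aleph0_mul_eq hκ

theorem exists_injective_forall_eq_of_mul_lt {A T K : Type} (g : A → T) (h : #T * #K < #A) :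
    ∃ t, ∃ a : K → A, Injective a ∧ ∀ j, g (a j) = t := by
  by_contra! hcon
  refine (mk_le_mk_mul_of_mk_preimage_le g fun t => ?_).not_gt h
  by_contra! hlt
  obtain ⟨e⟩ := hlt.le
  obtain ⟨j, hj⟩ := hcon t (fun j => e j) (Subtype.val_injective.comp e.injective)
  exact hj (e j).2

theorem mk_prod_pi_le {α K W C : Type} [Finite α] [Finite K] (hW : ℵ₀ ≤ #W) (hC : #C ≤ #W) :
    #((α → K → W) × C) ≤ #W := by
  rw [mk_prod, lift_id, lift_id, ← power_def, ← power_def]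
  calc (#W ^ #K) ^ #α * #C ≤ #W * #W := by
        gcongr
        exact (power_le_power_right (pow_le hW (lt_aleph0_of_finite K))).trans
          (pow_le hW (lt_aleph0_of_finite α))
    _ = #W := mul_eq_self hW

section Boxes

variable {ι ι' K X C : Type}

def IsMonochromaticBox (ψ : (ι → X) → C) (b : ι → K → X) (γ : C) : Prop :=
  (∀ i, Injective (b i)) ∧ ∀ r : ι → K, ψ (fun i => b i (r i)) = γ

theorem isMonochromaticBox_of_isEmpty [IsEmpty ι] (ψ : (ι → X) → C) :
    IsMonochromaticBox (K := K) ψ isEmptyElim (ψ isEmptyElim) :=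
  ⟨isEmptyElim, fun _ => congrArg ψ (Subsingleton.elim _ _)⟩

theorem IsMonochromaticBox.comp_equiv {ψ : (ι' → X) → C} (e : ι ≃ ι') {b : ι → K → X} {γ : C}
    (h : IsMonochromaticBox (fun v => ψ (v ∘ e.symm)) b γ) : IsMonochromaticBox ψ (b ∘ e.symm) γ :=
  ⟨fun _ => h.1 _, fun r => by simpa [comp_def] using h.2 (r ∘ e)⟩

theorem IsMonochromaticBox.option {ψ : (Option ι → X) → C} {a : K → X} (ha : Injective a)
    {B : ι → K → X} (hB : ∀ i, Injective (B i)) {γ : C}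
    (h : ∀ j (r : ι → K), ψ (fun o => o.elim (a j) fun i => B i (r i)) = γ) :
    IsMonochromaticBox ψ (fun o => o.elim a B) γ := by
  refine ⟨fun o => ?_, fun r => ?_⟩
  · cases o
    exacts [ha, hB _]
  · convert h (r none) (fun i => r (some i)) using 2
    ext o
    cases o <;> rfl

theorem exists_isMonochromaticBox_of_finite {X C : Type} [Infinite X] [Finite C] (K : Type) [Finite K]
    {ι : Type} [Finite ι] (ψ : (ι → X) → C) : ∃ (b : ι → K → X) (γ : C), IsMonochromaticBox ψ b γ := by
  induction ι using Finite.induction_empty_option generalizing C with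
  | of_equiv e ih =>
    obtain ⟨b, γ, hb⟩ := ih fun v => ψ (v ∘ e.symm)
    exact ⟨_, γ, hb.comp_equiv e⟩
  | h_empty => exact ⟨_, _, isMonochromaticBox_of_isEmpty ψ⟩
  | @h_option α _ ih =>
    set N := Nat.card C * Nat.card K + 1
    let A : Fin N ↪ X := Fin.valEmbedding.trans (Infinite.natEmbedding X)
    obtain ⟨B, Γ, hB⟩ := ih (C := Fin N → C) fun v j => ψ fun o => o.elim (A j) v
    obtain ⟨γ, a, ha, hγ⟩ := exists_injective_forall_eq_of_mul_lt (K := K) Γ (by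
      rw [mk_fin, ← Nat.cast_card, ← Nat.cast_card, ← Nat.cast_mul, Nat.cast_lt]
      exact Nat.lt_succ_self _)
    exact ⟨_, γ, IsMonochromaticBox.option (A.injective.comp ha) hB.1
      fun j r => (congrFun (hB.2 r) (a j)).trans (hγ j)⟩

theorem exists_isMonochromaticBox_of_cardPlus_le {X C : Type} [Infinite C] (K : Type) [Finite K]
    {ι : Type} [Finite ι] {S : Set X} (hS : cardPlus #C (Nat.card ι) ≤ #S)
    (ψ : (ι → X) → C) :
    ∃ (b : ι → K → X) (γ : C), IsMonochromaticBox ψ b γ ∧ ∀ i j, b i j ∈ S := by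
  induction ι using Finite.induction_empty_option generalizing S with
  | of_equiv e ih =>
    obtain ⟨b, γ, hb, hbS⟩ := ih (by rwa [Nat.card_congr e]) fun v => ψ (v ∘ e.symm)
    exact ⟨_, γ, hb.comp_equiv e, fun _ => hbS _⟩
  | h_empty => exact ⟨_, _, isMonochromaticBox_of_isEmpty ψ, isEmptyElim⟩
  | @h_option α _ ih =>
    set n := Nat.card α
    rw [Finite.card_option, cardPlus_succ] at hS
    have hCn : ℵ₀ ≤ cardPlus #C n := (aleph0_le_mk C).trans (le_cardPlus _ n)
    obtain ⟨W, hWS, hW⟩ := le_mk_iff_exists_subset.mp ((Order.le_succ _).trans hS)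
    choose B γ hB hBW using fun x : X => ih hW.ge fun v => ψ fun o => o.elim x v
    have hT : #((α → K → W) × C) ≤ cardPlus #C n :=
      hW ▸ mk_prod_pi_le (hW ▸ hCn) (hW ▸ le_cardPlus _ n)
    have hSinf : ℵ₀ ≤ #S := (hCn.trans (Order.le_succ _)).trans hS
    obtain ⟨⟨B₀, γ₀⟩, a, ha, hga⟩ := exists_injective_forall_eq_of_mul_lt (K := K)
      (fun x : S => ((fun i j => ⟨B x i j, hBW x i j⟩ : α → K → W), γ x))
      (mul_lt_of_lt hSinf (hT.trans_lt ((Order.lt_succ _).trans_le hS))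
        ((lt_aleph0_of_finite K).trans_le hSinf))
    simp only [Prod.mk.injEq] at hga
    have hBa : ∀ j, B (a j) = fun i k => (B₀ i k : X) := fun j =>
      funext₂ fun i k => congrArg Subtype.val (congrFun₂ (hga j).1 i k)
    refine ⟨_, γ₀, IsMonochromaticBox.option (Subtype.val_injective.comp ha)
      (B := fun i k => (B₀ i k : X)) (fun i k₁ k₂ h => ?_) fun j r => ?_, fun o k => ?_⟩
    · have := (hB (a k₁)).1 i
      rw [hBa k₁] at this
      exact this h
    · have := (hB (a j)).2 r
      rw [hBa j, (hga j).2] at this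
      exact this
    · cases o
      exacts [(a k).2, hWS (B₀ _ k).2]

end Boxes

open Classical in
theorem exists_mem_multiTemplateEdges_of_isMonochromaticBox {d : ℕ} {α X C : Type} {P : Set (Fin d → α)}
    (hP : P.Finite) [Nonempty P] {I : Set (Fin d)} (hI : IsDistinguisher P I) (z : X)
    {φ : (Fin d → X) → C} {b : I → P → X} {γ : C}
    (hb : IsMonochromaticBox (fun v : I → X => φ fun i => if h : i ∈ I then v ⟨i, h⟩ else z) b γ) :
    ∃ Q ∈ multiTemplateEdges X {P}, ∀ w ∈ Q, φ w = γ := by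
  have hg : ∀ i : Fin d, ∃ g : α → P, InjOn g ((· i) '' P) := fun i => by
    obtain ⟨g, -, hg⟩ := (hP.image (· i)).exists_injOn_of_encard_le (t := (univ : Set P))
      (by rw [encard_univ, ENat.card_coe_set_eq]; exact encard_image_le _ _)
    exact ⟨g, hg⟩
  choose g hg using hg
  let f : (Fin d → α) → Fin d → X := fun p i => if h : i ∈ I then b ⟨i, h⟩ (g i (p i)) else z
  have hf : InjOn f P := by
    intro x hx y hy hxy
    by_contra hne
    obtain ⟨i, hi, hxyi⟩ := hI x hx y hy hne
    have := congrFun hxy i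
    simp only [f, dif_pos hi] at this
    exact hxyi (hg i (mem_image_of_mem _ hx) (mem_image_of_mem _ hy) (hb.1 _ this))
  refine ⟨f '' P, ⟨P, rfl, f, hf, rfl, fun x _ y _ i hxy => by simp only [f, hxy]⟩, ?_⟩
  rintro _ ⟨p, -, rfl⟩
  exact hb.2 fun i => g i (p i)

open Classical in
theorem cardMinus_le_mk_of_isProperColoring {d : ℕ} {α X C : Type} [Infinite X]
    {P : Set (Fin d → α)} (hPfin : P.Finite) (hP : P.Nontrivial) {φ : (Fin d → X) → C}
    (hφ : IsProperColoring (multiTemplateEdges X {P}) φ) :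
    cardMinus #X (eTemplate P - 1) ≤ #C := by
  by_contra! hC
  obtain ⟨I, hIe, hI⟩ := exists_isDistinguisher_ncard_eq P
  have : Finite P := hPfin
  have : Nonempty P := hP.nonempty.to_subtype
  obtain ⟨z⟩ := (inferInstance : Nonempty X)
  obtain ⟨b, γ, hb⟩ : ∃ (b : I → P → X) (γ : C),
      IsMonochromaticBox (fun v : I → X => φ fun i => if h : i ∈ I then v ⟨i, h⟩ else z) b γ := by
    rcases finite_or_infinite C with _ | _
    · exact exists_isMonochromaticBox_of_finite P _
    · have hX : cardPlus #C (Nat.card I) ≤ #(univ : Set X) := by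
        rw [mk_univ, Nat.card_coe_set_eq, hIe, ← Nat.sub_add_cancel (eTemplate_pos hP),
          cardPlus_succ]
        exact Order.succ_le_of_lt (not_le.mp fun h => hC.not_ge (cardMinus_le h))
      obtain ⟨b, γ, hb, -⟩ := exists_isMonochromaticBox_of_cardPlus_le P hX _
      exact ⟨b, γ, hb⟩
  obtain ⟨Q, hQ, hγ⟩ := exists_mem_multiTemplateEdges_of_isMonochromaticBox hPfin hI z hb
  obtain ⟨x, hx, y, hy, hxy⟩ := hφ Q hQ
  exact hxy ((hγ x hx).trans (hγ y hy).symm)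

theorem stmt_5_general (d k : ℕ) (hk : 2 ≤ k) (α X : Type) [Infinite X]
    (P : Set (Fin d → α)) (hPcard : P.ncard = k) :
    chrNum (multiTemplateEdges X ({P} : Set (Set (Fin d → α)))) =
      cardMinus (Cardinal.mk X) (eTemplate P - 1) := by
  obtain ⟨hP, hPfin⟩ := one_lt_ncard_iff_nontrivial_and_finite.mp (hPcard ▸ hk)
  obtain ⟨C, φ, hC, hφ⟩ := exists_isProperColoring_mk_le (X := X) hP
  exact le_antisymm ((chrNum_le_mk hφ).trans hC) (le_chrNum ⟨C, φ, hφ⟩ fun _ _ =>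
    cardMinus_le_mk_of_isProperColoring hPfin hP)

/-- **Lemma 2.1.** If `P` is a `d`-dimensional `k`-template and `X` is an infinite set, then
`χ(L(X^d, P)) = |X|^{-(e(P) − 1)}`. -/
theorem stmt_5 (d k : ℕ) (hk : 2 ≤ k) (α X : Type) [Infinite X]
    (P : Set (Fin d → α)) (hPfin : P.Finite) (hPcard : P.ncard = k) :
    chrNum (multiTemplateEdges X ({P} : Set (Set (Fin d → α)))) =
      cardMinus (Cardinal.mk X) (eTemplate P - 1) :=
  stmt_5_general d k hk α X P hPcard
end

section
/- For every n with 1 ≤ n < ω, there exists a finite m such that every subset of ℝⁿ that is complete for the algebraic 4-hypergraph on ℝⁿ defined by the polynomial p_n(x,y,z,w)·q_n(x,y,z), where p_n(x,y,z,w) = ‖x − y‖² − ‖z − w‖² and q_n(x,y,z) = ‖x − y‖² − ‖z − y‖², has fewer than m elements. -/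
/-- The edge set of the algebraic `k`-hypergraph on `ℝⁿ` defined by a `(k × n)`-ary
polynomial `p`: its edges are the `k`-element subsets `{a₀, …, a_{k-1}}` of `ℝⁿ` admitting
an enumeration with `p(a₀, …, a_{k-1}) = 0`. -/
def algEdges (n k : ℕ) (p : MvPolynomial (Fin k × Fin n) ℝ) : Set (Set (Fin n → ℝ)) :=
  {s | ∃ a : Fin k → (Fin n → ℝ), Function.Injective a ∧ s = Set.range a ∧
      MvPolynomial.eval (fun q => a q.1 q.2) p = 0}

/-- `(ℝⁿ, E)` is an algebraic `k`-hypergraph: `2 ≤ k` and `E` is defined by some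
`(k × n)`-ary polynomial. -/
def IsAlgebraicHypergraph (n k : ℕ) (E : Set (Set (Fin n → ℝ))) : Prop :=
  2 ≤ k ∧ ∃ p : MvPolynomial (Fin k × Fin n) ℝ, E = algEdges n k p

/-- `X` is complete for a `k`-hypergraph with edge set `E`: every `k`-element subset of `X`
is an edge. -/
def IsCompleteIn {V : Type} (E : Set (Set V)) (k : ℕ) (X : Set V) : Prop :=
  ∀ s : Set V, s ⊆ X → s.Finite → s.ncard = k → s ∈ E

/-- `X` is independent for a `k`-hypergraph with edge set `E`: no `k`-element subset of `X`
is an edge. -/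
def IsIndependentIn {V : Type} (E : Set (Set V)) (k : ℕ) (X : Set V) : Prop :=
  ∀ s : Set V, s ⊆ X → s.Finite → s.ncard = k → s ∉ E

/-- The `(4 × n)`-ary polynomial `pₙ(x,y,z,w) · qₙ(x,y,z)` where
`pₙ(x,y,z,w) = ‖x − y‖² − ‖z − w‖²` and `qₙ(x,y,z) = ‖x − y‖² − ‖z − y‖²`,
with blocks `x = x₀, y = x₁, z = x₂, w = x₃`. -/
noncomputable def erdosPoly (n : ℕ) : MvPolynomial (Fin 4 × Fin n) ℝ :=
  ((∑ i : Fin n, (MvPolynomial.X (0, i) - MvPolynomial.X (1, i)) ^ 2) -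
    (∑ i : Fin n, (MvPolynomial.X (2, i) - MvPolynomial.X (3, i)) ^ 2)) *
  ((∑ i : Fin n, (MvPolynomial.X (0, i) - MvPolynomial.X (1, i)) ^ 2) -
    (∑ i : Fin n, (MvPolynomial.X (2, i) - MvPolynomial.X (1, i)) ^ 2))

noncomputable section
namespace Erdos13

variable {n : ℕ}

def D (x y : Fin n → ℝ) : ℝ := ∑ i, (x i - y i)^2

lemma D_comm (x y : Fin n → ℝ) : D x y = D y x := by
  unfold D; apply Finset.sum_congr rfl; intros; ring

lemma D_ne_zero {x y : Fin n → ℝ} (h : x ≠ y) : D x y ≠ 0 := by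
  intro h0
  apply h; funext i
  have hnn : ∀ j ∈ Finset.univ, (0:ℝ) ≤ (x j - y j)^2 := fun j _ => sq_nonneg _
  have h1 := (Finset.sum_eq_zero_iff_of_nonneg hnn).1 h0 i (Finset.mem_univ i)
  have h2 := pow_eq_zero_iff (n := 2) (by norm_num) |>.1 h1
  linarith [sub_eq_zero.1 h2]

lemma D_expand (x u : Fin n → ℝ) :
    D x u = (∑ i, (x i)^2) - 2 * (∑ i, u i * x i) + ∑ i, (u i)^2 := by
  calc D x u = ∑ i, ((x i)^2 - 2*(u i * x i) + (u i)^2) := by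
        unfold D; apply Finset.sum_congr rfl; intros; ring
    _ = (∑ i, (x i)^2) - (∑ i, 2*(u i * x i)) + ∑ i, (u i)^2 := by
        rw [Finset.sum_add_distrib, Finset.sum_sub_distrib]
    _ = _ := by rw [← Finset.mul_sum]

lemma eval_erdosPoly (a : Fin 4 → Fin n → ℝ) :
    MvPolynomial.eval (fun q => a q.1 q.2) (erdosPoly n) =
      (D (a 0) (a 1) - D (a 2) (a 3)) * (D (a 0) (a 1) - D (a 2) (a 1)) := by
  simp [erdosPoly, D]

set_option maxHeartbeats 1000000 in
lemma twelve {a b c x : Fin n → ℝ}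
    (hab : a ≠ b) (hac : a ≠ c) (hax : a ≠ x) (hbc : b ≠ c) (hbx : b ≠ x) (hcx : c ≠ x)
    (h1 : D a b ≠ D a c) (h2 : D a b ≠ D b c) (h3 : D a c ≠ D b c)
    {p q r t : Fin n → ℝ}
    (hp : p ∈ ({a,b,c,x} : Set (Fin n → ℝ))) (hq : q ∈ ({a,b,c,x} : Set (Fin n → ℝ)))
    (hr : r ∈ ({a,b,c,x} : Set (Fin n → ℝ))) (ht : t ∈ ({a,b,c,x} : Set (Fin n → ℝ)))
    (hpq : p ≠ q) (hrt : r ≠ t)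
    (hpair : ¬((p = r ∧ q = t) ∨ (p = t ∧ q = r))) (hD : D p q = D r t) :
    D x a = D x b ∨ D x a = D x c ∨ D x b = D x c ∨
    D x a = D a b ∨ D x a = D a c ∨ D x a = D b c ∨
    D x b = D a b ∨ D x b = D a c ∨ D x b = D b c ∨
    D x c = D a b ∨ D x c = D a c ∨ D x c = D b c := by
  simp only [Set.mem_insert_iff, Set.mem_singleton_iff] at hp hq hr ht
  rcases hp with rfl|rfl|rfl|rfl <;> rcases hq with rfl|rfl|rfl|rfl <;>
    rcases hr with rfl|rfl|rfl|rfl <;> rcases ht with rfl|rfl|rfl|rfl <;>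
      simp_all [D_comm]

abbrev M (n : ℕ) := (Fin n → ℝ) × ℝ × ℝ

def ψ (x : Fin n → ℝ) : M n := (x, ∑ i, (x i)^2, 1)

noncomputable def lf (α : ℝ) (β : Fin n → ℝ) (γ : ℝ) : M n →ₗ[ℝ] ℝ :=
  α • ((LinearMap.fst ℝ ℝ ℝ).comp (LinearMap.snd ℝ (Fin n → ℝ) (ℝ × ℝ)))
  + (∑ i, β i • ((LinearMap.proj i).comp (LinearMap.fst ℝ (Fin n → ℝ) (ℝ × ℝ))))
  + γ • ((LinearMap.snd ℝ ℝ ℝ).comp (LinearMap.snd ℝ (Fin n → ℝ) (ℝ × ℝ)))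

lemma lf_apply (α : ℝ) (β : Fin n → ℝ) (γ : ℝ) (y : Fin n → ℝ) (s t₀ : ℝ) :
    lf α β γ (y, s, t₀) = α * s + (∑ i, β i * y i) + γ * t₀ := by
  simp [lf, LinearMap.sum_apply, smul_eq_mul]

lemma sphere_functional (u : Fin n → ℝ) (ρ : ℝ) (hρ : ρ ≠ 0) :
    ∃ f : M n →ₗ[ℝ] ℝ, (∀ x, D x u = ρ → f (ψ x) = 0) ∧ f (ψ u) ≠ 0 := by
  refine ⟨lf 1 (fun i => -2 * u i) ((∑ i, (u i)^2) - ρ), ?_, ?_⟩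
  · intro x hx
    rw [D_expand] at hx
    rw [ψ, lf_apply]
    have h : (∑ i, (-2 * u i) * x i) = -2 * ∑ i, u i * x i := by
      rw [Finset.mul_sum]; apply Finset.sum_congr rfl; intros; ring
    rw [h]; linarith
  · rw [ψ, lf_apply]
    have h : (∑ i, (-2 * u i) * u i) = -2 * ∑ i, u i * u i := by
      rw [Finset.mul_sum]; apply Finset.sum_congr rfl; intros; ring
    rw [h]
    have h2 : (∑ i, (u i)^2) = ∑ i, u i * u i := by apply Finset.sum_congr rfl; intros; ring
    rw [h2]
    intro h'; apply hρ; linarith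

lemma bisector_functional (u v : Fin n → ℝ) (huv : u ≠ v) :
    ∃ f : M n →ₗ[ℝ] ℝ, (∀ x, D x u = D x v → f (ψ x) = 0) ∧ f (ψ u) ≠ 0 := by
  refine ⟨lf 0 (fun i => 2 * (v i - u i)) ((∑ i, (u i)^2) - ∑ i, (v i)^2), ?_, ?_⟩
  · intro x hx
    rw [D_expand, D_expand] at hx
    rw [ψ, lf_apply]
    have h : (∑ i, (2 * (v i - u i)) * x i)
        = 2 * (∑ i, v i * x i) - 2 * (∑ i, u i * x i) := by
      rw [Finset.mul_sum, Finset.mul_sum, ← Finset.sum_sub_distrib]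
      apply Finset.sum_congr rfl; intros; ring
    rw [h]; linarith
  · rw [ψ, lf_apply]
    have hD := D_ne_zero huv
    rw [D_expand] at hD
    have h : (∑ i, (2 * (v i - u i)) * u i)
        = 2 * (∑ i, v i * u i) - 2 * (∑ i, u i * u i) := by
      rw [Finset.mul_sum, Finset.mul_sum, ← Finset.sum_sub_distrib]
      apply Finset.sum_congr rfl; intros; ring
    rw [h]
    have h2 : (∑ i, (u i)^2) = ∑ i, u i * u i := by apply Finset.sum_congr rfl; intros; ring
    have h3 : (∑ i, v i * u i) = ∑ i, u i * v i := by apply Finset.sum_congr rfl; intros; ring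
    intro h'; apply hD
    rw [h2] at h' ⊢
    rw [h3] at h'
    linarith

lemma rank_drop {X S : Set (Fin n → ℝ)} {f : M n →ₗ[ℝ] ℝ} {p : Fin n → ℝ}
    (hp : p ∈ X) (hfp : f (ψ p) ≠ 0) (hker : ∀ x ∈ S, f (ψ x) = 0) :
    Module.finrank ℝ (Submodule.span ℝ (ψ '' (X ∩ S)))
      < Module.finrank ℝ (Submodule.span ℝ (ψ '' X)) := by
  set A := Submodule.span ℝ (ψ '' (X ∩ S))
  set B := Submodule.span ℝ (ψ '' X)
  have hAB : A ≤ B := Submodule.span_mono (Set.image_mono Set.inter_subset_left)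
  have hAker : A ≤ LinearMap.ker f := by
    rw [Submodule.span_le]
    rintro y ⟨x, hx, rfl⟩
    exact hker x hx.2
  by_contra hcon
  push_neg at hcon
  have hAeqB : A = B := Submodule.eq_of_le_of_finrank_le hAB hcon
  have hpB : ψ p ∈ B := Submodule.subset_span ⟨p, hp, rfl⟩
  rw [← hAeqB] at hpB
  exact hfp (hAker hpB)

/-- Property R: every 4 distinct points of `X` admit a repeated `D`-value on two
distinct pairs. -/
def PR (X : Set (Fin n → ℝ)) : Prop :=
  ∀ a b c x : Fin n → ℝ, a ∈ X → b ∈ X → c ∈ X → x ∈ X →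
    a ≠ b → a ≠ c → a ≠ x → b ≠ c → b ≠ x → c ≠ x →
    ∃ p q r t : Fin n → ℝ,
      p ∈ ({a,b,c,x} : Set (Fin n → ℝ)) ∧ q ∈ ({a,b,c,x} : Set (Fin n → ℝ)) ∧
      r ∈ ({a,b,c,x} : Set (Fin n → ℝ)) ∧ t ∈ ({a,b,c,x} : Set (Fin n → ℝ)) ∧
      p ≠ q ∧ r ≠ t ∧ ¬((p = r ∧ q = t) ∨ (p = t ∧ q = r)) ∧ D p q = D r t

lemma PR.mono {X Y : Set (Fin n → ℝ)} (h : PR X) (hYX : Y ⊆ X) : PR Y :=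
  fun a b c x ha hb hc hx => h a b c x (hYX ha) (hYX hb) (hYX hc) (hYX hx)

/-- The recursive bound. -/
def Nb : ℕ → ℕ
  | 0 => 0
  | (d+1) => 3 + 12 * Nb d

lemma ncard_union_le_of_le {α : Type*} {A B : Set α} {k l : ℕ}
    (hA : A.ncard ≤ k) (hB : B.ncard ≤ l) : (A ∪ B).ncard ≤ k + l :=
  (Set.ncard_union_le A B).trans (add_le_add hA hB)

set_option maxHeartbeats 2000000 in
lemma main_ind : ∀ (d : ℕ) (X : Set (Fin n → ℝ)), X.Finite → PR X →
    Module.finrank ℝ (Submodule.span ℝ (ψ '' X)) ≤ d → X.ncard ≤ Nb d := by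
  intro d
  induction d with
  | zero =>
    intro X hfin hPR hrank
    have hX : X = ∅ := by
      by_contra hne
      obtain ⟨x, hx⟩ := Set.nonempty_iff_ne_empty.2 hne
      have h0 : Submodule.span ℝ (ψ '' X) = ⊥ := by
        have h1 : Module.finrank ℝ (Submodule.span ℝ (ψ '' X)) = 0 :=
          le_antisymm hrank (Nat.zero_le _)
        exact Submodule.finrank_eq_zero.1 h1
      have hmem : ψ x ∈ (⊥ : Submodule ℝ (M n)) := h0 ▸ Submodule.subset_span ⟨x, hx, rfl⟩
      have h2 := (Submodule.mem_bot ℝ).1 hmem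
      have h3 : (1:ℝ) = 0 := congrArg (fun z => z.2.2) h2
      norm_num at h3
    simp [hX, Nb]
  | succ d IH =>
    intro X hfin hPR hrank
    -- generic piece bound
    have piece : ∀ (S : Set (Fin n → ℝ)) (f : M n →ₗ[ℝ] ℝ) (p : Fin n → ℝ),
        p ∈ X → f (ψ p) ≠ 0 → (∀ x ∈ S, f (ψ x) = 0) → (X ∩ S).ncard ≤ Nb d := by
      intro S f p hp hfp hker
      apply IH _ (hfin.subset Set.inter_subset_left) (hPR.mono Set.inter_subset_left)
      have := rank_drop hp hfp hker
      omega
    have pieceS : ∀ (u v w : Fin n → ℝ), u ∈ X → v ≠ w →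
        (X ∩ {x | D x u = D v w}).ncard ≤ Nb d := by
      intro u v w hu hvw
      obtain ⟨f, hf, hfu⟩ := sphere_functional u (D v w) (D_ne_zero hvw)
      exact piece _ f u hu hfu (fun x hx => hf x hx)
    have pieceB : ∀ (u v : Fin n → ℝ), u ∈ X → u ≠ v →
        (X ∩ {x | D x u = D x v}).ncard ≤ Nb d := by
      intro u v hu huv
      obtain ⟨f, hf, hfu⟩ := bisector_functional u v huv
      exact piece _ f u hu hfu (fun x hx => hf x hx)
    have hCfin : ∀ S : Set (Fin n → ℝ), (X ∩ S).Finite :=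
      fun S => hfin.subset Set.inter_subset_left
    by_cases hrb : ∃ a ∈ X, ∃ b ∈ X, ∃ c ∈ X, a ≠ b ∧ a ≠ c ∧ b ≠ c ∧
        D a b ≠ D a c ∧ D a b ≠ D b c ∧ D a c ≠ D b c
    · -- Case A: rainbow triangle
      obtain ⟨a, ha, b, hb, c, hc, hab, hac, hbc, h1, h2, h3⟩ := hrb
      have hsub : X ⊆ ({a,b,c} : Set (Fin n → ℝ)) ∪
          ((X ∩ {x | D x a = D x b}) ∪ ((X ∩ {x | D x a = D x c}) ∪
          ((X ∩ {x | D x b = D x c}) ∪ ((X ∩ {x | D x a = D a b}) ∪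
          ((X ∩ {x | D x a = D a c}) ∪ ((X ∩ {x | D x a = D b c}) ∪
          ((X ∩ {x | D x b = D a b}) ∪ ((X ∩ {x | D x b = D a c}) ∪
          ((X ∩ {x | D x b = D b c}) ∪ ((X ∩ {x | D x c = D a b}) ∪
          ((X ∩ {x | D x c = D a c}) ∪ (X ∩ {x | D x c = D b c})))))))))))) := by
        intro x hx
        by_cases hx3 : x ∈ ({a,b,c} : Set (Fin n → ℝ))
        · exact Set.mem_union_left _ hx3
        · have hax : a ≠ x := fun h => hx3 (by simp [h])
          have hbx : b ≠ x := fun h => hx3 (by simp [h])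
          have hcx : c ≠ x := fun h => hx3 (by simp [h])
          obtain ⟨p, q, r, t, hp, hq, hr, ht, hpq, hrt, hpair, hD⟩ :=
            hPR a b c x ha hb hc hx hab hac hax hbc hbx hcx
          have hdisj := twelve hab hac hax hbc hbx hcx h1 h2 h3 hp hq hr ht hpq hrt hpair hD
          simp only [Set.mem_union, Set.mem_inter_iff, Set.mem_setOf_eq]
          rcases hdisj with h|h|h|h|h|h|h|h|h|h|h|h
          · exact Or.inr (Or.inl ⟨hx, h⟩)
          · exact Or.inr (Or.inr (Or.inl ⟨hx, h⟩))
          · exact Or.inr (Or.inr (Or.inr (Or.inl ⟨hx, h⟩)))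
          · exact Or.inr (Or.inr (Or.inr (Or.inr (Or.inl ⟨hx, h⟩))))
          · exact Or.inr (Or.inr (Or.inr (Or.inr (Or.inr (Or.inl ⟨hx, h⟩)))))
          · exact Or.inr (Or.inr (Or.inr (Or.inr (Or.inr (Or.inr (Or.inl ⟨hx, h⟩))))))
          · exact Or.inr (Or.inr (Or.inr (Or.inr (Or.inr (Or.inr (Or.inr (Or.inl ⟨hx, h⟩)))))))
          · exact Or.inr (Or.inr (Or.inr (Or.inr (Or.inr (Or.inr (Or.inr (Or.inr (Or.inl ⟨hx, h⟩))))))))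
          · exact Or.inr (Or.inr (Or.inr (Or.inr (Or.inr (Or.inr (Or.inr (Or.inr (Or.inr (Or.inl ⟨hx, h⟩)))))))))
          · exact Or.inr (Or.inr (Or.inr (Or.inr (Or.inr (Or.inr (Or.inr (Or.inr (Or.inr (Or.inr (Or.inl ⟨hx, h⟩))))))))))
          · exact Or.inr (Or.inr (Or.inr (Or.inr (Or.inr (Or.inr (Or.inr (Or.inr (Or.inr (Or.inr (Or.inr (Or.inl ⟨hx, h⟩)))))))))))
          · exact Or.inr (Or.inr (Or.inr (Or.inr (Or.inr (Or.inr (Or.inr (Or.inr (Or.inr (Or.inr (Or.inr (Or.inr ⟨hx, h⟩)))))))))))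
      have habc : ({a,b,c} : Set (Fin n → ℝ)).ncard ≤ 3 := by
        apply le_trans (Set.ncard_insert_le _ _)
        have : ({b,c} : Set (Fin n → ℝ)).ncard ≤ 2 := by
          apply le_trans (Set.ncard_insert_le _ _)
          simp
        omega
      have hfinT : (({a,b,c} : Set (Fin n → ℝ)) ∪
          ((X ∩ {x | D x a = D x b}) ∪ ((X ∩ {x | D x a = D x c}) ∪
          ((X ∩ {x | D x b = D x c}) ∪ ((X ∩ {x | D x a = D a b}) ∪
          ((X ∩ {x | D x a = D a c}) ∪ ((X ∩ {x | D x a = D b c}) ∪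
          ((X ∩ {x | D x b = D a b}) ∪ ((X ∩ {x | D x b = D a c}) ∪
          ((X ∩ {x | D x b = D b c}) ∪ ((X ∩ {x | D x c = D a b}) ∪
          ((X ∩ {x | D x c = D a c}) ∪ (X ∩ {x | D x c = D b c}))))))))))))).Finite := by
        refine (Set.toFinite _).union ?_
        exact (hCfin _).union ((hCfin _).union ((hCfin _).union ((hCfin _).union
          ((hCfin _).union ((hCfin _).union ((hCfin _).union ((hCfin _).union
          ((hCfin _).union ((hCfin _).union ((hCfin _).union (hCfin _)))))))))))
      have hle := Set.ncard_le_ncard hsub hfinT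
      have htot := ncard_union_le_of_le habc
        (ncard_union_le_of_le (pieceB a b ha hab)
        (ncard_union_le_of_le (pieceB a c ha hac)
        (ncard_union_le_of_le (pieceB b c hb hbc)
        (ncard_union_le_of_le (pieceS a a b ha hab)
        (ncard_union_le_of_le (pieceS a a c ha hac)
        (ncard_union_le_of_le (pieceS a b c ha hbc)
        (ncard_union_le_of_le (pieceS b a b hb hab)
        (ncard_union_le_of_le (pieceS b a c hb hac)
        (ncard_union_le_of_le (pieceS b b c hb hbc)
        (ncard_union_le_of_le (pieceS c a b hc hab)
        (ncard_union_le_of_le (pieceS c a c hc hac) (pieceS c b c hc hbc))))))))))))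
      have : X.ncard ≤ 3 + 12 * Nb d := by omega
      simpa [Nb] using this
    · -- Case B: every triangle isosceles
      push_neg at hrb
      by_cases h2pts : ∃ a ∈ X, ∃ b ∈ X, a ≠ b
      · obtain ⟨a, ha, b, hb, hab⟩ := h2pts
        have hsub : X ⊆ ({a,b} : Set (Fin n → ℝ)) ∪
            ((X ∩ {x | D x a = D x b}) ∪ ((X ∩ {x | D x a = D a b}) ∪
            (X ∩ {x | D x b = D a b}))) := by
          intro x hx
          by_cases hx2 : x ∈ ({a,b} : Set (Fin n → ℝ))
          · exact Set.mem_union_left _ hx2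
          · have hxa : x ≠ a := fun h => hx2 (by simp [h])
            have hxb : x ≠ b := fun h => hx2 (by simp [h])
            have hiso := hrb x hx a ha b hb hxa hxb hab
            simp only [Set.mem_union, Set.mem_inter_iff, Set.mem_setOf_eq]
            by_cases e1 : D x a = D x b
            · tauto
            · by_cases e2 : D x a = D a b
              · tauto
              · have := hiso e1 e2
                tauto
        have hab2 : ({a,b} : Set (Fin n → ℝ)).ncard ≤ 2 := by
          apply le_trans (Set.ncard_insert_le _ _)
          simp
        have hfinT : (({a,b} : Set (Fin n → ℝ)) ∪
            ((X ∩ {x | D x a = D x b}) ∪ ((X ∩ {x | D x a = D a b}) ∪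
            (X ∩ {x | D x b = D a b})))).Finite :=
          (Set.toFinite _).union ((hCfin _).union ((hCfin _).union (hCfin _)))
        have hle := Set.ncard_le_ncard hsub hfinT
        have htot := ncard_union_le_of_le hab2
          (ncard_union_le_of_le (pieceB a b ha hab)
          (ncard_union_le_of_le (pieceS a a b ha hab) (pieceS b a b hb hab)))
        have : X.ncard ≤ 3 + 12 * Nb d := by omega
        simpa [Nb] using this
      · push_neg at h2pts
        have hss : X.ncard ≤ 1 := by
          apply (Set.ncard_le_one hfin).2
          intro u hu v hv
          by_contra hne
          exact hne (h2pts u hu v hv)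
        have : (1 : ℕ) ≤ 3 + 12 * Nb d := by omega
        simp only [Nb]
        omega

lemma complete_PR {X : Set (Fin n → ℝ)}
    (h : IsCompleteIn (algEdges n 4 (erdosPoly n)) 4 X) : PR X := by
  intro a b c x ha hb hc hx hab hac hax hbc hbx hcx
  have hsub : ({a,b,c,x} : Set (Fin n → ℝ)) ⊆ X := by
    intro y hy
    simp only [Set.mem_insert_iff, Set.mem_singleton_iff] at hy
    rcases hy with rfl|rfl|rfl|rfl <;> assumption
  have hcard : ({a,b,c,x} : Set (Fin n → ℝ)).ncard = 4 := by
    rw [Set.ncard_insert_of_notMem (by simp [hab, hac, hax]),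
      Set.ncard_insert_of_notMem (by simp [hbc, hbx]), Set.ncard_pair hcx]
  obtain ⟨e, hinj, hrange, heval⟩ := h _ hsub (Set.toFinite _) hcard
  rw [eval_erdosPoly] at heval
  have hmem : ∀ i, e i ∈ ({a,b,c,x} : Set (Fin n → ℝ)) := by
    intro i; rw [hrange]; exact Set.mem_range_self i
  rcases mul_eq_zero.1 heval with h0 | h0 <;> rw [sub_eq_zero] at h0
  · exact ⟨e 0, e 1, e 2, e 3, hmem 0, hmem 1, hmem 2, hmem 3,
      hinj.ne (by decide), hinj.ne (by decide),
      by simp [hinj.eq_iff], h0⟩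
  · exact ⟨e 0, e 1, e 2, e 1, hmem 0, hmem 1, hmem 2, hmem 1,
      hinj.ne (by decide), hinj.ne (by decide),
      by simp [hinj.eq_iff], h0⟩

end Erdos13
end

/-- For every `n ≥ 1` there is a finite `m` such that every subset of `ℝⁿ` complete for the
algebraic 4-hypergraph defined by `pₙ(x,y,z,w) · qₙ(x,y,z)` has fewer than `m` elements. -/
theorem stmt_13 (n : ℕ) (hn : 1 ≤ n) :
    ∃ m : ℕ, ∀ X : Set (Fin n → ℝ),
      IsCompleteIn (algEdges n 4 (erdosPoly n)) 4 X → Cardinal.mk X < m := by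
  classical
  refine ⟨Erdos13.Nb (Module.finrank ℝ (Erdos13.M n)) + 1, ?_⟩
  intro X hX
  have hPR : Erdos13.PR X := Erdos13.complete_PR hX
  set d := Module.finrank ℝ (Erdos13.M n) with hd
  have key : ∀ Y : Set (Fin n → ℝ), Y.Finite → Erdos13.PR Y → Y.ncard ≤ Erdos13.Nb d :=
    fun Y hf hp => Erdos13.main_ind d Y hf hp (Submodule.finrank_le _)
  have hXfin : X.Finite := by
    by_contra hinf
    obtain ⟨Y, hYX, hYfin, hYcard⟩ :=
      Set.Infinite.exists_subset_ncard_eq hinf (Erdos13.Nb d + 1)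
    have := key Y hYfin (hPR.mono hYX)
    omega
  have hcard := key X hXfin hPR
  haveI := hXfin.fintype
  have hmk : Cardinal.mk X = (X.ncard : Cardinal) := by
    rw [Cardinal.mk_fintype, Set.ncard_eq_toFinset_card', Set.toFinset_card]
  rw [hmk]
  have : X.ncard < Erdos13.Nb d + 1 := by omega
  exact_mod_cast this
end

section
/- For every n with 1 ≤ n < ω, every infinite X ⊆ ℝⁿ has a subset Y ⊆ X with |Y| = |X| such that Y is independent for the algebraic 4-hypergraph on ℝⁿ defined by the polynomial p_n(x,y,z,w)·q_n(x,y,z), where p_n(x,y,z,w) = ‖x − y‖² − ‖z − w‖² and q_n(x,y,z) = ‖x − y‖² − ‖z − y‖². -/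
/-!
An edge of the hypergraph consists of two pairs `{x, y} ≠ {z, w}` or `{x, y} ≠ {z, y}` at equal
distance, so it suffices to find `Y ⊆ X` of size `|X|` in which distinct pairs have distinct
distances.

Spheres and perpendicular bisectors are zero sets of functions `a ‖x‖² + ⟪b, x⟫ + c`, which form a
space of dimension at most `n + 2`. A `κ`-pool is a subset of `X` of size `κ` meeting each such
zero set that does not contain it in fewer than `κ` points; choosing a subset whose vanishing
subspace is maximal gives one. For regular `κ = |X|`, points of a `κ`-pool can be chosen greedily,
each avoiding fewer than `κ` spheres and bisectors through the earlier ones.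

For singular `κ` of cofinality `θ`, take regular `λ_t` increasing to `κ` (`t < θ`) and
`λ_t`-pools `C_t`, filled one after another. The points chosen must not put a later pool on a
sphere about one of them or on a bisector of two of them; this works when no pool traps another,
where `A` traps `B` if every point of `B` is equidistant from all points of `A`. The bisector
functionals of a chain of traps are linearly independent, so such chains are shorter than `n + 3`,
and the Erdős–Dushnik–Miller theorem `θ → (θ, n + 3)²` yields `θ` pools no two of which trap each
other.
-/

namespace DistinctDistances

open Cardinal Set Order

universe u

theorem mk_union_lt_of_lt {α : Type*} {κ : Cardinal} (hκ : ℵ₀ ≤ κ) {s t : Set α} (hs : #s < κ)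
    (ht : #t < κ) : #↥(s ∪ t) < κ :=
  (mk_union_le s t).trans_lt (add_lt_of_lt hκ hs ht)

theorem exists_le_mk_of_forall_insert {α : Type*} {Good : Set α → Prop} {P C : Set α}
    {κ : Cardinal} (hP : Good P)
    (hchain : ∀ c : Set (Set α), IsChain (· ⊆ ·) c → c.Nonempty → (∀ Y ∈ c, Good Y) →
      Good (⋃₀ c))
    (hins : ∀ Y, Good Y → P ⊆ Y → Y ⊆ P ∪ C → #Y < κ → ∃ z ∈ C, z ∉ Y ∧ Good (insert z Y)) :
    ∃ Y, Good Y ∧ P ⊆ Y ∧ Y ⊆ P ∪ C ∧ κ ≤ #Y := by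
  obtain ⟨M, hPM, ⟨hM, -, hMPC⟩, hmax⟩ :=
    zorn_subset_nonempty {Y | Good Y ∧ P ⊆ Y ∧ Y ⊆ P ∪ C}
      (fun c hcS hc hne => ⟨⋃₀ c,
        ⟨hchain c hc hne fun Y hY => (hcS hY).1,
          hne.elim fun Y hY => (hcS hY).2.1.trans (subset_sUnion_of_mem hY),
          sUnion_subset fun Y hY => (hcS hY).2.2⟩,
        fun _ => subset_sUnion_of_mem⟩) P ⟨hP, subset_rfl, subset_union_left⟩
  refine ⟨M, hM, hPM, hMPC, not_lt.1 fun hlt => ?_⟩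
  obtain ⟨z, hzC, hzM, hz⟩ := hins M hM hPM hMPC hlt
  exact hzM (hmax ⟨hz, hPM.trans (subset_insert z M),
    insert_subset (Or.inr hzC) hMPC⟩ (subset_insert z M) (mem_insert z M))

/-- The Erdős–Dushnik–Miller partition relation `θ → (θ, N)²` for regular `θ`. -/
theorem exists_isIndepSet_of_forall_not_isNClique {ι : Type u} (G : SimpleGraph ι)
    {θ : Cardinal.{u}} (hθ : θ.IsRegular) (N : ℕ) {A : Set ι} (hA : θ ≤ #A)
    (hfree : ∀ s : Finset ι, ↑s ⊆ A → ¬ G.IsNClique N s) :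
    ∃ B ⊆ A, #B = θ ∧ G.IsIndepSet B := by
  classical
  induction N generalizing A with
  | zero => exact absurd (by simp) (hfree ∅ (by simp))
  | succ N ih =>
    by_cases hbig : ∃ a ∈ A, θ ≤ #↥(A ∩ G.neighborSet a)
    · obtain ⟨a, haA, ha⟩ := hbig
      obtain ⟨B, hB, hBθ, hBind⟩ := ih ha fun s hs hsN =>
        hfree (insert a s) (by simpa [insert_subset_iff, haA] using hs.trans inter_subset_left)
          (hsN.insert fun b hb => (hs hb).2)
      exact ⟨B, hB.trans inter_subset_left, hBθ, hBind⟩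
    · push Not at hbig
      obtain ⟨Y, hYind, -, hYA, hθY⟩ := exists_le_mk_of_forall_insert (Good := G.IsIndepSet)
        (P := ∅) (C := A) (κ := θ) (by simp)
        (fun c hc _ h => (pairwise_sUnion hc.directedOn).2 h) fun Y hY _ hYA hYθ => by
          rw [empty_union] at hYA
          have hsmall : #↥(Y ∪ ⋃ y ∈ Y, A ∩ G.neighborSet y) < #A :=
            (mk_union_le _ _).trans_lt <| (add_lt_of_lt hθ.aleph0_le hYθ
              ((card_biUnion_lt_iff_forall_of_isRegular hθ hYθ).2 fun y hy =>
                hbig y (hYA hy))).trans_le hA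
          obtain ⟨z, hzA, hz⟩ := sdiff_nonempty_of_mk_lt_mk hsmall
          simp only [mem_union, mem_iUnion, mem_inter_iff, not_or, not_exists, not_and] at hz
          refine ⟨z, hzA, hz.1, hY.insert fun y hy _ => ?_⟩
          exact ⟨fun h => hz.2 y hy hzA h.symm, fun h => hz.2 y hy hzA h⟩
      obtain ⟨B, hBY, hBθ⟩ := le_mk_iff_exists_subset.1 hθY
      exact ⟨B, hBY.trans (by simpa using hYA), hBθ, hYind.mono hBY⟩

theorem _root_.Directed.exists_mem_of_four_mem_iUnion {α ι : Type*} {f : ι → Set α}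
    (hf : Directed (· ⊆ ·) f) {a b c d : α} (ha : a ∈ ⋃ i, f i) (hb : b ∈ ⋃ i, f i)
    (hc : c ∈ ⋃ i, f i) (hd : d ∈ ⋃ i, f i) : ∃ i, a ∈ f i ∧ b ∈ f i ∧ c ∈ f i ∧ d ∈ f i := by
  classical
  have : Nonempty ι := let ⟨i, _⟩ := mem_iUnion.1 ha; ⟨i⟩
  obtain ⟨i, hi⟩ := hf.exists_mem_subset_of_finset_subset_biUnion (s := {a, b, c, d})
    (by simp [insert_subset_iff, ha, hb, hc, hd])
  simp only [Finset.coe_insert, Finset.coe_singleton, insert_subset_iff, singleton_subset_iff]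
    at hi
  exact ⟨i, hi⟩

theorem linearIndependent_of_triangular {K α ι : Type*} [Field K] [LinearOrder ι]
    (f : ι → α → K) (y : ι → α) (hdiag : ∀ i, f i (y i) ≠ 0)
    (hlower : ∀ i j, i < j → f i (y j) = 0) : LinearIndependent K f := by
  classical
  refine linearIndependent_iff'.2 fun s g hg i his => by_contra fun hgi => ?_
  set S := s.filter (g · ≠ 0)
  have hS : S.Nonempty := ⟨i, Finset.mem_filter.2 ⟨his, hgi⟩⟩
  obtain ⟨hjs, hgj⟩ := Finset.mem_filter.1 (S.max'_mem hS)
  set j := S.max' hS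
  have heval := congr_fun hg (y j)
  rw [Finset.sum_apply, Finset.sum_eq_single j (fun k hks hkj => ?_) (absurd hjs)] at heval
  · exact mul_ne_zero hgj (hdiag j) heval
  rcases hkj.lt_or_gt with hlt | hgt
  · simp [hlower k j hlt]
  · have : g k = 0 := by_contra fun hgk =>
      (S.le_max' k (Finset.mem_filter.2 ⟨hks, hgk⟩)).not_gt hgt
    simp [this]

/-! ### Pools -/

section Pool

variable {K : Type*} {α : Type u} [Field K] (V : Submodule K (α → K))

def IsPool (κ : Cardinal.{u}) (C : Set α) : Prop :=
  #C = κ ∧ ∀ f ∈ V, (∃ x ∈ C, f x ≠ 0) → #↥{x ∈ C | f x = 0} < κ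

theorem exists_isPool [FiniteDimensional K V] {A : Set α} {κ : Cardinal.{u}} (hκ : κ ≤ #A) :
    ∃ C ⊆ A, IsPool V κ C := by
  let vanishing : Set α → Submodule K V := fun S =>
    ⨅ x ∈ S, LinearMap.ker ((LinearMap.proj x).comp V.subtype)
  have mem_vanishing {S : Set α} {f : V} : f ∈ vanishing S ↔ ∀ x ∈ S, (f : α → K) x = 0 := by
    simp [vanishing]
  have hne : {W | ∃ S ⊆ A, κ ≤ #S ∧ W = vanishing S}.Nonempty := ⟨_, A, subset_rfl, hκ, rfl⟩
  obtain ⟨_, ⟨S, hSA, hκS, rfl⟩, hmax⟩ :=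
    (set_has_maximal_iff_noetherian (R := K) (M := V)).2 inferInstance _ hne
  have hsmall : ∀ f ∈ V, (∃ x ∈ S, f x ≠ 0) → #↥{x ∈ S | f x = 0} < κ := by
    rintro f hf ⟨x, hxS, hfx⟩
    by_contra! hκf
    refine hmax _ ⟨_, fun y hy => hSA hy.1, hκf, rfl⟩ (lt_of_le_of_ne ?_ fun h => ?_)
    · exact fun g hg => mem_vanishing.2 fun y hy => mem_vanishing.1 hg y hy.1
    · have hf' : (⟨f, hf⟩ : V) ∈ vanishing {x ∈ S | f x = 0} := mem_vanishing.2 fun y hy => hy.2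
      exact hfx (mem_vanishing.1 (h ▸ hf') x hxS)
  obtain ⟨C, hCS, hCκ⟩ := le_mk_iff_exists_subset.1 hκS
  refine ⟨C, hCS.trans hSA, hCκ, fun f hf ⟨x, hxC, hfx⟩ => ?_⟩
  refine (mk_le_mk_of_subset ?_).trans_lt (hsmall f hf ⟨x, hCS hxC, hfx⟩)
  exact fun y hy => ⟨hCS hy.1, hy.2⟩

variable {V} in
theorem IsPool.nontrivial {κ : Cardinal.{u}} {C : Set α} (hC : IsPool V κ C) (hκ : ℵ₀ ≤ κ) :
    C.Nontrivial :=
  nontrivial_coe_sort.1 <| one_lt_iff_nontrivial.1 (hC.1 ▸ one_lt_aleph0.trans_le hκ)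

end Pool

/-! ### Distances in `ℝⁿ` -/

variable {n : ℕ}

def sqDist (x y : Fin n → ℝ) : ℝ := ∑ i, (x i - y i) ^ 2

theorem sqDist_comm (x y : Fin n → ℝ) : sqDist x y = sqDist y x := by
  simp only [sqDist, ← neg_sub (x _), neg_sq]

@[simp] theorem sqDist_self (x : Fin n → ℝ) : sqDist x x = 0 := by simp [sqDist]

theorem sqDist_ne_zero {x y : Fin n → ℝ} (h : x ≠ y) : sqDist x y ≠ 0 := by
  obtain ⟨i, hi⟩ := Function.ne_iff.1 h
  exact (Finset.sum_pos' (fun j _ => sq_nonneg (x j - y j))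
    ⟨i, Finset.mem_univ i, sq_pos_of_ne_zero (sub_ne_zero.2 hi)⟩).ne'

variable (n) in
def quadrics : Submodule ℝ ((Fin n → ℝ) → ℝ) :=
  Submodule.span ℝ (insert (fun x => ∑ i, x i ^ 2) (insert 1 (range fun i x => x i)))

instance : FiniteDimensional ℝ (quadrics n) :=
  FiniteDimensional.span_of_finite ℝ ((finite_range _).insert _ |>.insert _)

theorem finrank_quadrics_le : Module.finrank ℝ (quadrics n) ≤ n + 2 := by
  classical
  let s : Finset ((Fin n → ℝ) → ℝ) :=
    insert (fun x => ∑ i, x i ^ 2) (insert 1 (Finset.univ.image fun i x => x i))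
  have hs : (s : Set ((Fin n → ℝ) → ℝ)).finrank ℝ ≤ s.card := finrank_span_finset_le_card s
  rw [show (s : Set ((Fin n → ℝ) → ℝ)) =
    insert (fun x => ∑ i, x i ^ 2) (insert 1 (range fun i x => x i)) by simp [s]] at hs
  have h1 : s.card ≤ _ + 1 := Finset.card_insert_le _ _
  have h2 := Finset.card_insert_le (1 : (Fin n → ℝ) → ℝ) (Finset.univ.image fun i x => x i)
  have h3 : (Finset.univ.image fun (i : Fin n) (x : Fin n → ℝ) => x i).card ≤ n :=
    Finset.card_image_le.trans (by simp)
  exact hs.trans (by omega)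

theorem sqDist_sub_mem_quadrics (u : Fin n → ℝ) (r : ℝ) :
    (fun x => sqDist x u - r) ∈ quadrics n := by
  have h : (fun x => sqDist x u - r) = (fun x => ∑ i, x i ^ 2) +
      ∑ i, (-2 * u i) • (fun x => x i) + (∑ i, u i ^ 2 - r) • (1 : (Fin n → ℝ) → ℝ) := by
    ext x
    simp [sqDist, sub_sq, Finset.sum_add_distrib, Finset.sum_sub_distrib, mul_comm,
      mul_left_comm]
    ring
  rw [h]
  refine add_mem (add_mem (Submodule.subset_span (mem_insert _ _))
    (Submodule.sum_mem _ fun i _ => Submodule.smul_mem _ _ (Submodule.subset_span ?_)))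
    (Submodule.smul_mem _ _ (Submodule.subset_span (mem_insert_of_mem _ (mem_insert _ _))))
  exact mem_insert_of_mem _ (mem_insert_of_mem _ ⟨i, rfl⟩)

theorem sqDist_sub_sqDist_mem_quadrics (u u' : Fin n → ℝ) :
    (fun x => sqDist x u - sqDist x u') ∈ quadrics n := by
  convert sub_mem (sqDist_sub_mem_quadrics u 0) (sqDist_sub_mem_quadrics u' 0) using 1
  ext x
  simp

def HasDistinctDists (Y : Set (Fin n → ℝ)) : Prop :=
  ∀ a ∈ Y, ∀ b ∈ Y, ∀ c ∈ Y, ∀ d ∈ Y, a ≠ b → c ≠ d → sqDist a b = sqDist c d →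
    s(a, b) = s(c, d)

theorem HasDistinctDists.isIndependentIn {Y : Set (Fin n → ℝ)} (hY : HasDistinctDists Y) :
    IsIndependentIn (algEdges n 4 (erdosPoly n)) 4 Y := by
  rintro s hsY - - ⟨a, ha, rfl, hev⟩
  have hmem : ∀ i, a i ∈ Y := fun i => hsY ⟨i, rfl⟩
  have hne : ∀ {i j}, i ≠ j → a i ≠ a j := fun hij h => hij (ha h)
  have heval : MvPolynomial.eval (fun q => a q.1 q.2) (erdosPoly n) =
      (sqDist (a 0) (a 1) - sqDist (a 2) (a 3)) * (sqDist (a 0) (a 1) - sqDist (a 2) (a 1)) := by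
    simp [erdosPoly, sqDist]
  rcases mul_eq_zero.1 (heval ▸ hev) with h | h
  · rcases Sym2.eq_iff.1 (hY _ (hmem 0) _ (hmem 1) _ (hmem 2) _ (hmem 3) (hne (by decide))
      (hne (by decide)) (sub_eq_zero.1 h)) with ⟨h02, -⟩ | ⟨h03, -⟩
    exacts [hne (by decide) h02, hne (by decide) h03]
  · rcases Sym2.eq_iff.1 (hY _ (hmem 0) _ (hmem 1) _ (hmem 2) _ (hmem 1) (hne (by decide))
      (hne (by decide)) (sub_eq_zero.1 h)) with ⟨h02, -⟩ | ⟨h01, -⟩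
    exacts [hne (by decide) h02, hne (by decide) h01]

theorem HasDistinctDists.insert {T : Set (Fin n → ℝ)} (hT : HasDistinctDists T) {z : Fin n → ℝ}
    (hsphere : ∀ u ∈ T, ∀ a ∈ T, ∀ b ∈ T, sqDist z u ≠ sqDist a b)
    (hbisector : ∀ a ∈ T, ∀ b ∈ T, a ≠ b → sqDist z a ≠ sqDist z b) :
    HasDistinctDists (insert z T) := by
  have hz : ∀ b ∈ T, ∀ c, (c = z ∨ c ∈ T) → ∀ d, (d = z ∨ d ∈ T) → c ≠ d →
      sqDist z b = sqDist c d → s(z, b) = s(c, d) := by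
    intro b hbT c hc d hd hcd h
    rcases hc with rfl | hcT
    · by_contra hbd
      exact hbisector b hbT d (hd.resolve_left (Ne.symm hcd)) (fun h' => hbd (h' ▸ rfl)) h
    rcases hd with rfl | hdT
    · by_contra hbc
      exact hbisector b hbT c hcT (fun h' => hbc (h' ▸ Sym2.eq_swap)) (h.trans (sqDist_comm _ _))
    exact absurd h (hsphere b hbT c hcT d hdT)
  intro a ha b hb c hc d hd hab hcd h
  rcases ha with rfl | haT
  · exact hz b (hb.resolve_left (Ne.symm hab)) c hc d hd hcd h
  rcases hb with rfl | hbT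
  · rw [Sym2.eq_swap]
    exact hz a haT c hc d hd hcd (sqDist_comm a _ ▸ h)
  rcases hc with rfl | hcT
  · exact (hz d (hd.resolve_left (Ne.symm hcd)) a (Or.inr haT) b (Or.inr hbT) hab h.symm).symm
  rcases hd with rfl | hdT
  · rw [Sym2.eq_swap (a := c)]
    exact (hz c hcT a (Or.inr haT) b (Or.inr hbT) hab (sqDist_comm c _ ▸ h.symm)).symm
  exact hT a haT b hbT c hcT d hdT hab hcd h

def OnSphereAbout (B : Set (Fin n → ℝ)) (p : Fin n → ℝ) : Prop :=
  ∀ x ∈ B, ∀ x' ∈ B, sqDist p x = sqDist p x'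

def OnBisector (B : Set (Fin n → ℝ)) (p p' : Fin n → ℝ) : Prop :=
  ∀ x ∈ B, sqDist x p = sqDist x p'

theorem onBisector_comm {B : Set (Fin n → ℝ)} {p p' : Fin n → ℝ} :
    OnBisector B p p' ↔ OnBisector B p' p :=
  ⟨fun h x hx => (h x hx).symm, fun h x hx => (h x hx).symm⟩

def Traps (A B : Set (Fin n → ℝ)) : Prop :=
  ∀ x ∈ B, OnSphereAbout A x

/-- The pools in `F` can still be filled after the points of `P`. -/
def Compatible (F : Set (Set (Fin n → ℝ))) (P : Set (Fin n → ℝ)) : Prop :=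
  HasDistinctDists P ∧
    ∀ B ∈ F, ∀ p ∈ P, ¬ OnSphereAbout B p ∧ ∀ p' ∈ P, p ≠ p' → ¬ OnBisector B p p'

theorem Compatible.mono {F F' : Set (Set (Fin n → ℝ))} {P P' : Set (Fin n → ℝ)}
    (h : Compatible F P) (hF : F' ⊆ F) (hP : P' ⊆ P) : Compatible F' P' :=
  ⟨fun a ha b hb c hc d hd => h.1 a (hP ha) b (hP hb) c (hP hc) d (hP hd),
    fun B hB p hp => ⟨(h.2 B (hF hB) p (hP hp)).1,
      fun p' hp' => (h.2 B (hF hB) p (hP hp)).2 p' (hP hp')⟩⟩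

theorem compatible_iUnion {ι : Type*} {F : Set (Set (Fin n → ℝ))} {f : ι → Set (Fin n → ℝ)}
    (hf : Directed (· ⊆ ·) f) (h : ∀ i, Compatible F (f i)) : Compatible F (⋃ i, f i) := by
  refine ⟨fun a ha b hb c hc d hd => ?_, fun B hB p hp => ⟨?_, fun p' hp' => ?_⟩⟩
  · obtain ⟨i, ha, hb, hc, hd⟩ := hf.exists_mem_of_four_mem_iUnion ha hb hc hd
    exact (h i).1 a ha b hb c hc d hd
  · obtain ⟨i, hp⟩ := mem_iUnion.1 hp
    exact ((h i).2 B hB p hp).1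
  · obtain ⟨i, hp, hp', -⟩ := hf.exists_mem_of_four_mem_iUnion hp hp' hp hp
    exact ((h i).2 B hB p hp).2 p' hp'

theorem Compatible.insert {F : Set (Set (Fin n → ℝ))} {T : Set (Fin n → ℝ)} (hT : Compatible F T)
    {z : Fin n → ℝ} (hsphere : ∀ u ∈ T, ∀ a ∈ T, ∀ b ∈ T, sqDist z u ≠ sqDist a b)
    (hbisector : ∀ a ∈ T, ∀ b ∈ T, a ≠ b → sqDist z a ≠ sqDist z b)
    (hF : ∀ B ∈ F, ¬ OnSphereAbout B z ∧ ∀ u ∈ T, ¬ OnBisector B z u) :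
    Compatible F (insert z T) := by
  refine ⟨hT.1.insert hsphere hbisector, fun B hB p hp => ?_⟩
  rcases hp with rfl | hpT
  · exact ⟨(hF B hB).1, fun p' hp' hpp' =>
      (hF B hB).2 p' (hp'.resolve_left (Ne.symm hpp'))⟩
  refine ⟨(hT.2 B hB p hpT).1, fun p' hp' hpp' => ?_⟩
  rcases hp' with rfl | hp'T
  · exact fun h => (hF B hB).2 p hpT (onBisector_comm.1 h)
  exact (hT.2 B hB p hpT).2 p' hp'T hpp'

/-! ### Filling a pool -/

section Fill

variable {κ : Cardinal.{0}} {C : Set (Fin n → ℝ)}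

theorem IsPool.mk_sphere_lt (hC : IsPool (quadrics n) κ C) {u : Fin n → ℝ}
    (hu : ¬ OnSphereAbout C u) (r : ℝ) : #↥{y ∈ C | sqDist y u = r} < κ := by
  have hr : ∃ x ∈ C, sqDist x u - r ≠ 0 := by
    by_contra! h
    refine hu fun x hx x' hx' => ?_
    rw [sqDist_comm u x, sqDist_comm u x']
    linarith [h x hx, h x' hx']
  simpa only [sub_eq_zero] using hC.2 _ (sqDist_sub_mem_quadrics u r) hr

theorem IsPool.mk_bisector_lt (hC : IsPool (quadrics n) κ C) {u u' : Fin n → ℝ}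
    (h : ¬ OnBisector C u u') : #↥{y ∈ C | sqDist y u = sqDist y u'} < κ := by
  have hr : ∃ x ∈ C, sqDist x u - sqDist x u' ≠ 0 := by
    by_contra! h'
    exact h fun x hx => sub_eq_zero.1 (h' x hx)
  simpa only [sub_eq_zero] using hC.2 _ (sqDist_sub_sqDist_mem_quadrics u u') hr

theorem IsPool.mk_onSphereAbout_lt (hC : IsPool (quadrics n) κ C) {B : Set (Fin n → ℝ)}
    (h : ¬ Traps B C) : #↥{y ∈ C | OnSphereAbout B y} < κ := by
  obtain ⟨x, hxC, hx⟩ := not_forall₂.1 h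
  obtain ⟨u, hu, u', hu', hne⟩ : ∃ u ∈ B, ∃ u' ∈ B, sqDist x u ≠ sqDist x u' := by
    simpa [OnSphereAbout] using hx
  refine (mk_le_mk_of_subset ?_).trans_lt (hC.mk_bisector_lt fun h => hne (h x hxC))
  exact fun y hy => ⟨hy.1, hy.2 u hu u' hu'⟩

theorem IsPool.mk_onBisector_lt (hC : IsPool (quadrics n) κ C) {B : Set (Fin n → ℝ)}
    (h : ¬ Traps C B) (u : Fin n → ℝ) : #↥{y ∈ C | OnBisector B y u} < κ := by
  obtain ⟨x, hxB, hx⟩ := not_forall₂.1 h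
  refine (mk_le_mk_of_subset ?_).trans_lt (hC.mk_sphere_lt hx (sqDist x u))
  exact fun y hy => ⟨hy.1, sqDist_comm y x ▸ hy.2 x hxB⟩

theorem IsPool.exists_generic_point (hκ : κ.IsRegular) (hC : IsPool (quadrics n) κ C)
    {F : Set (Set (Fin n → ℝ))} (hF : #F < κ) (hFC : ∀ B ∈ F, ¬ Traps B C ∧ ¬ Traps C B)
    {T : Set (Fin n → ℝ)} (hT : #T < κ)
    (hTC : ∀ u ∈ T, ¬ OnSphereAbout C u ∧ ∀ u' ∈ T, u ≠ u' → ¬ OnBisector C u u') :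
    ∃ z ∈ C, z ∉ T ∧ (∀ u ∈ T, ∀ a ∈ T, ∀ b ∈ T, sqDist z u ≠ sqDist a b) ∧
      (∀ a ∈ T, ∀ b ∈ T, a ≠ b → sqDist z a ≠ sqDist z b) ∧
      ∀ B ∈ F, ¬ OnSphereAbout B z ∧ ∀ u ∈ T, ¬ OnBisector B z u := by
  have hκ₀ := hκ.aleph0_le
  have hT' : ∀ a, #↥(T \ {a}) < κ := fun a => (mk_le_mk_of_subset sdiff_subset).trans_lt hT
  have hsphere : #↥(⋃ u ∈ T, ⋃ a ∈ T, ⋃ b ∈ T, {y ∈ C | sqDist y u = sqDist a b}) < κ := by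
    simp only [card_biUnion_lt_iff_forall_of_isRegular hκ hT]
    exact fun u hu _ _ _ _ => hC.mk_sphere_lt (hTC u hu).1 _
  have hbisector : #↥(⋃ a ∈ T, ⋃ b ∈ T \ {a}, {y ∈ C | sqDist y a = sqDist y b}) < κ := by
    simp only [card_biUnion_lt_iff_forall_of_isRegular hκ hT,
      card_biUnion_lt_iff_forall_of_isRegular hκ (hT' _)]
    exact fun a ha b hb => hC.mk_bisector_lt ((hTC a ha).2 b hb.1 (Ne.symm hb.2))
  have hcentre : #↥(⋃ B ∈ F, {y ∈ C | OnSphereAbout B y}) < κ :=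
    (card_biUnion_lt_iff_forall_of_isRegular hκ hF).2 fun B hB =>
      hC.mk_onSphereAbout_lt (hFC B hB).1
  have hcross : #↥(⋃ B ∈ F, ⋃ u ∈ T, {y ∈ C | OnBisector B y u}) < κ := by
    simp only [card_biUnion_lt_iff_forall_of_isRegular hκ hF,
      card_biUnion_lt_iff_forall_of_isRegular hκ hT]
    exact fun B hB u _ => hC.mk_onBisector_lt (hFC B hB).2 u
  obtain ⟨z, hzC, hz⟩ := sdiff_nonempty_of_mk_lt_mk <| hC.1.symm ▸
    mk_union_lt_of_lt hκ₀ (mk_union_lt_of_lt hκ₀ (mk_union_lt_of_lt hκ₀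
      (mk_union_lt_of_lt hκ₀ hT hsphere) hbisector) hcentre) hcross
  simp only [mem_union, mem_iUnion, mem_ofPred_eq, mem_sdiff, mem_singleton_iff, not_or,
    not_exists, not_and, exists_prop] at hz
  obtain ⟨⟨⟨⟨hzT, hz₁⟩, hz₂⟩, hz₃⟩, hz₄⟩ := hz
  exact ⟨z, hzC, hzT, fun u hu a ha b hb => hz₁ u hu a ha b hb hzC,
    fun a ha b hb hab => hz₂ a ha b ⟨hb, Ne.symm hab⟩ hzC,
    fun B hB => ⟨hz₃ B hB hzC, fun u hu => hz₄ B hB u hu hzC⟩⟩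

theorem IsPool.exists_insert_compatible (hκ : κ.IsRegular) (hC : IsPool (quadrics n) κ C)
    {F : Set (Set (Fin n → ℝ))} (hF : #F < κ) (hFC : ∀ B ∈ F, ¬ Traps B C ∧ ¬ Traps C B)
    {T : Set (Fin n → ℝ)} (hT : #T < κ) (hTC : Compatible (insert C F) T) :
    ∃ z ∈ C, z ∉ T ∧ Compatible (insert C F) (insert z T) := by
  obtain ⟨z, hzC, hzT, hsphere, hbisector, hF'⟩ :=
    hC.exists_generic_point hκ hF hFC hT fun u hu => hTC.2 C (mem_insert _ _) u hu
  refine ⟨z, hzC, hzT, hTC.insert hsphere hbisector fun B hB => ?_⟩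
  rcases hB with rfl | hB
  · obtain ⟨x, hxB, hxz⟩ := (hC.nontrivial hκ.aleph0_le).exists_ne z
    refine ⟨fun h => sqDist_ne_zero hxz.symm ?_, fun u hu h => ?_⟩
    · simpa using (h z hzC x hxB).symm
    · exact sqDist_ne_zero (fun hzu : z = u => hzT (hzu ▸ hu)) (by simpa using (h z hzC).symm)
  · exact hF' B hB

theorem IsPool.exists_compatible_block (hκ : κ.IsRegular) (hC : IsPool (quadrics n) κ C)
    {F : Set (Set (Fin n → ℝ))} (hF : #F < κ) (hFC : ∀ B ∈ F, ¬ Traps B C ∧ ¬ Traps C B)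
    {P : Set (Fin n → ℝ)} (hP : #P < κ) (hPC : Compatible (insert C F) P) :
    ∃ Z ⊆ C, #Z = κ ∧ Compatible F (P ∪ Z) := by
  obtain ⟨Y, hY, hPY, hYPC, hκY⟩ := exists_le_mk_of_forall_insert (C := C) (κ := κ) hPC
    (fun c hc _ h => sUnion_eq_iUnion ▸
      compatible_iUnion (directedOn_iff_directed.1 hc.directedOn) fun Y => h Y Y.2)
    fun T hT _ _ hTκ => hC.exists_insert_compatible hκ hF hFC hTκ hT
  have hκY' : κ ≤ #↥(Y \ P) := not_lt.1 fun h =>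
    (hκY.trans (le_mk_sdiff_add_mk Y P)).not_gt (add_lt_of_lt hκ.aleph0_le h hP)
  obtain ⟨Z, hZ, hZκ⟩ := le_mk_iff_exists_subset.1 hκY'
  exact ⟨Z, fun z hz => (hYPC (hZ hz).1).resolve_left (hZ hz).2, hZκ,
    hY.mono (subset_insert _ _) (union_subset hPY fun z hz => (hZ hz).1)⟩

end Fill

theorem exists_hasDistinctDists_of_isRegular {X : Set (Fin n → ℝ)} (hX : (#X).IsRegular) :
    ∃ Y ⊆ X, #Y = #X ∧ HasDistinctDists Y := by
  obtain ⟨C, hCX, hC⟩ := exists_isPool (quadrics n) le_rfl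
  obtain ⟨Z, hZC, hZ, hZc⟩ := hC.exists_compatible_block hX (F := ∅) (P := ∅)
    (by simpa using hX.pos) (by simp) (by simpa using hX.pos) ⟨by simp [HasDistinctDists], by simp⟩
  exact ⟨Z, hZC.trans hCX, hZ, by simpa using hZc.1⟩

/-! ### Traps -/

theorem le_of_traps_chain {m : ℕ} (C : Fin m → Set (Fin n → ℝ)) (hC : ∀ i, (C i).Nontrivial)
    (htraps : ∀ i j, i < j → Traps (C i) (C j)) : m ≤ n + 2 := by
  choose y hy y' hy' hne using hC
  -- the bisector functional of `y i, y' i` vanishes on every later `C j` but not at `y i`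
  let f : Fin m → quadrics n := fun i =>
    ⟨fun x => sqDist x (y i) - sqDist x (y' i), sqDist_sub_sqDist_mem_quadrics _ _⟩
  have hf : LinearIndependent ℝ f := .of_comp (quadrics n).subtype <|
    linearIndependent_of_triangular _ y (fun i => by simpa [f] using sqDist_ne_zero (hne i))
      fun i j hij => sub_eq_zero.2 (htraps i j hij (y j) (hy j) (y i) (hy i) (y' i) (hy' i))
  simpa using hf.fintype_card_le_finrank.trans finrank_quadrics_le

section Thinning

variable {ι : Type*} {θ : Cardinal} (C : ι → Set (Fin n → ℝ))

theorem exists_forall_lt_not_traps [LinearOrder ι] (hθ : θ.IsRegular) (hC : ∀ i, (C i).Nontrivial)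
    {A : Set ι} (hA : θ ≤ #A) :
    ∃ B ⊆ A, #B = θ ∧ ∀ i ∈ B, ∀ j ∈ B, i < j → ¬ Traps (C i) (C j) := by
  let G := SimpleGraph.fromRel fun i j => i < j ∧ Traps (C i) (C j)
  obtain ⟨B, hBA, hBθ, hB⟩ := exists_isIndepSet_of_forall_not_isNClique G hθ (n + 3) hA
    fun s _ hs => by
      let e := s.orderEmbOfFin hs.card_eq
      have hchain : ∀ i j, i < j → Traps (C (e i)) (C (e j)) := fun i j hij => by
        have hadj := hs.isClique (s.orderEmbOfFin_mem _ i) (s.orderEmbOfFin_mem _ j)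
          (e.injective.ne hij.ne)
        rcases ((SimpleGraph.fromRel_adj _ _ _).1 hadj).2 with h | h
        exacts [h.2, absurd h.1 (e.strictMono hij).not_gt]
      have := le_of_traps_chain (C ∘ e) (fun i => hC _) hchain
      omega
  exact ⟨B, hBA, hBθ, fun i hi j hj hij h =>
    hB hi hj hij.ne ((SimpleGraph.fromRel_adj _ _ _).2 ⟨hij.ne, Or.inl ⟨hij, h⟩⟩)⟩

theorem exists_pairwise_not_traps [LinearOrder ι] (hθ : θ.IsRegular) (hC : ∀ i, (C i).Nontrivial)
    {A : Set ι} (hA : θ ≤ #A) :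
    ∃ B ⊆ A, #B = θ ∧ ∀ i ∈ B, ∀ j ∈ B, i ≠ j → ¬ Traps (C i) (C j) := by
  obtain ⟨B₁, hB₁A, hB₁, h₁⟩ := exists_forall_lt_not_traps C hθ hC hA
  obtain ⟨B, hBB₁, hB, h₂⟩ :=
    exists_forall_lt_not_traps (ι := ιᵒᵈ) (C ∘ OrderDual.ofDual) hθ (fun i => hC _) (A := B₁)
      hB₁.ge
  refine ⟨B, hBB₁.trans hB₁A, hB, fun i hi j hj hij => ?_⟩
  rcases hij.lt_or_gt with h | h
  exacts [h₁ i (hBB₁ hi) j (hBB₁ hj) h, h₂ i hi j hj h]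

end Thinning

/-! ### Singular cardinals -/

theorem exists_strictMono_isRegular_cofinal {κ : Cardinal.{u}} (hκ : κ.IsSingular) :
    ∃ l : κ.ord.cof.ord.ToType → Cardinal.{u}, StrictMono l ∧
      (∀ t, (l t).IsRegular ∧ κ.ord.cof < l t ∧ l t < κ) ∧ ∀ c < κ, ∃ t, c < l t := by
  set θ := κ.ord.cof
  have hθ : θ.IsRegular := isRegular_cof (isSuccLimit_ord hκ.aleph0_le)
  obtain ⟨f, hf⟩ := Ordinal.exists_isFundamentalSeq (o := κ.ord) (a := θ.ord) rfl
  let μ : θ.ord.ToType → Cardinal.{u} := fun t => (f (Ordinal.ToType.mk.symm t)).1.card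
  have hμκ : ∀ t, μ t < κ := fun t => lt_ord.1 (f _).2
  have hμ : ∀ c < κ, ∃ t, c ≤ μ t := fun c hc => by
    obtain ⟨_, ⟨i, rfl⟩, hi⟩ := hf.isCofinal_range ⟨c.ord, ord_lt_ord.2 hc⟩
    exact ⟨Ordinal.ToType.mk i, by simpa [μ] using Ordinal.card_le_card (Subtype.coe_le_coe.2 hi)⟩
  have hwf : WellFounded ((· < ·) : θ.ord.ToType → θ.ord.ToType → Prop) := wellFounded_lt
  let l := hwf.fix fun t rec => succ (θ + μ t + ⨆ s : Iio t, rec s s.2)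
  have hl : ∀ t, l t = succ (θ + μ t + ⨆ s : Iio t, l s) := hwf.fix_eq _
  have hlκ : ∀ t, l t < κ := fun t => hwf.induction (C := fun t => l t < κ) t fun t ih => by
    have hsup : ⨆ s : Iio t, l s < κ :=
      iSup_lt_of_lt_cof_ord (by simpa using mk_Iio_lt t) fun s => ih s s.2
    rw [hl]
    exact hκ.isSuccLimit.succ_lt (add_lt_of_lt hκ.aleph0_le
      (add_lt_of_lt hκ.aleph0_le hκ.cof_ord_lt (hμκ t)) hsup)
  refine ⟨l, fun s t hst => ?_, fun t => ⟨?_, ?_, hlκ t⟩, fun c hc => ?_⟩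
  · rw [hl t]
    exact ((le_ciSup bddAbove_of_small (⟨s, hst⟩ : Iio t)).trans le_add_self).trans_lt
      (lt_succ _)
  · rw [hl]
    exact isRegular_succ (hθ.aleph0_le.trans (le_self_add.trans le_self_add))
  · rw [hl]
    exact (le_self_add.trans le_self_add).trans_lt (lt_succ _)
  · obtain ⟨t, ht⟩ := hμ c hc
    refine ⟨t, ht.trans_lt ?_⟩
    rw [hl]
    exact (le_add_self.trans le_self_add).trans_lt (lt_succ _)

section Blocks

variable {ι : Type} [LinearOrder ι] {l : ι → Cardinal.{0}} {C : ι → Set (Fin n → ℝ)} {B : Set ι}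

theorem exists_next_block (hB : ∀ i ∈ B, ∀ j ∈ B, i ≠ j → ¬ Traps (C i) (C j)) {t : ι}
    (hreg : (l t).IsRegular) (hι : #ι < l t) (hC : IsPool (quadrics n) (l t) (C t))
    {P : Set (Fin n → ℝ)} (hP : #P < l t) (hPC : Compatible (C '' {s | s ∈ B ∧ t ≤ s}) P) :
    ∃ W ⊆ C t, (t ∈ B → #W = l t) ∧ Compatible (C '' {s | s ∈ B ∧ t < s}) (P ∪ W) := by
  by_cases ht : t ∈ B
  · have hF : #↥(C '' {s | s ∈ B ∧ t < s}) < l t :=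
      mk_image_le.trans_lt ((mk_le_mk_of_subset (subset_univ _)).trans_lt (by simpa using hι))
    obtain ⟨W, hWC, hW, hWc⟩ := hC.exists_compatible_block hreg hF
      (by
        rintro _ ⟨s, ⟨hs, hts⟩, rfl⟩
        exact ⟨hB s hs t ht hts.ne', hB t ht s hs hts.ne⟩)
      hP (hPC.mono (by
        rintro _ (rfl | ⟨s, ⟨hs, hts⟩, rfl⟩)
        exacts [⟨t, ⟨ht, le_rfl⟩, rfl⟩, ⟨s, ⟨hs, hts.le⟩, rfl⟩]) subset_rfl)
    exact ⟨W, hWC, fun _ => hW, hWc⟩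
  · refine ⟨∅, empty_subset _, fun h => absurd h ht, ?_⟩
    rw [union_empty]
    exact hPC.mono (image_mono fun s hs => ⟨hs.1, hs.2.le⟩) subset_rfl

theorem exists_blocks_hasDistinctDists [WellFoundedLT ι] (hl : StrictMono l)
    (hreg : ∀ t, (l t).IsRegular) (hι : ∀ t, #ι < l t) (hC : ∀ t, IsPool (quadrics n) (l t) (C t))
    (hB : ∀ i ∈ B, ∀ j ∈ B, i ≠ j → ¬ Traps (C i) (C j)) :
    ∃ Z : ι → Set (Fin n → ℝ), (∀ t, Z t ⊆ C t) ∧ (∀ t ∈ B, #(Z t) = l t) ∧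
      HasDistinctDists (⋃ t, Z t) := by
  let spec : Set (Fin n → ℝ) → ι → Set (Fin n → ℝ) → Prop := fun P t Z =>
    Z ⊆ C t ∧ (t ∈ B → #Z = l t) ∧ Compatible (C '' {s | s ∈ B ∧ t < s}) (P ∪ Z)
  have hwf : WellFounded ((· < ·) : ι → ι → Prop) := wellFounded_lt
  let Z := hwf.fix fun t rec => Classical.epsilon (spec (⋃ s : Iio t, rec s s.2) t)
  have hZ : ∀ t, Z t = Classical.epsilon (spec (⋃ s : Iio t, Z s) t) := hwf.fix_eq _
  let Q : ι → Set (Fin n → ℝ) := fun t => (⋃ s : Iio t, Z s) ∪ Z t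
  have hQ : Monotone Q := fun t t' htt' => union_subset
    (iUnion_subset fun s => (subset_iUnion (fun s : Iio t' => Z s) ⟨s, s.2.trans_le htt'⟩).trans
      subset_union_left) <| by
    rcases htt'.lt_or_eq with h | rfl
    exacts [(subset_iUnion (fun s : Iio t' => Z s) ⟨t, h⟩).trans subset_union_left,
      subset_union_right]
  have hspec : ∀ t, spec (⋃ s : Iio t, Z s) t (Z t) := fun t =>
    hwf.induction (C := fun t => spec (⋃ s : Iio t, Z s) t (Z t)) t fun t ih => by
      rw [hZ t]
      refine Classical.epsilon_spec (exists_next_block hB (hreg t) (hι t) (hC t) ?_ ?_)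
      · exact (card_iUnion_lt_iff_forall_of_isRegular (hreg t)
          ((mk_le_mk_of_subset (subset_univ _)).trans_lt (by simpa using hι t))).2
          fun s => (mk_le_mk_of_subset (ih s s.2).1).trans_lt ((hC s).1 ▸ hl s.2)
      · exact (compatible_iUnion (hQ.comp (Subtype.mono_coe _)).directed_le fun s =>
          (ih s s.2).2.2.mono (image_mono fun u hu => ⟨hu.1, s.2.trans_le hu.2⟩) subset_rfl).mono
          subset_rfl (iUnion_mono fun s => subset_union_right)
  refine ⟨Z, fun t => (hspec t).1, fun t ht => (hspec t).2.1 ht, ?_⟩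
  exact ((compatible_iUnion hQ.directed_le fun t =>
    (hspec t).2.2.mono (empty_subset _) subset_rfl).mono subset_rfl
    (iUnion_mono fun t => subset_union_right)).1

end Blocks

theorem exists_hasDistinctDists_of_isSingular {X : Set (Fin n → ℝ)} (hX : (#X).IsSingular) :
    ∃ Y ⊆ X, #Y = #X ∧ HasDistinctDists Y := by
  obtain ⟨l, hl, hlX, hcof⟩ := exists_strictMono_isRegular_cofinal hX
  choose C hCX hC using fun t => exists_isPool (quadrics n) (hlX t).2.2.le
  obtain ⟨B, -, hBθ, hB⟩ := exists_pairwise_not_traps C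
    (isRegular_cof (isSuccLimit_ord hX.aleph0_le))
    (fun t => (hC t).nontrivial (hlX t).1.aleph0_le) (A := univ) (by simp)
  obtain ⟨Z, hZC, hZ, hZd⟩ := exists_blocks_hasDistinctDists hl (fun t => (hlX t).1)
    (by simpa using fun t => (hlX t).2.1) hC hB
  have hYX : (⋃ t, Z t) ⊆ X := iUnion_subset fun t => (hZC t).trans (hCX t)
  refine ⟨⋃ t, Z t, hYX, (mk_le_mk_of_subset hYX).antisymm (le_of_forall_lt fun c hc => ?_), hZd⟩
  obtain ⟨t, ht⟩ := hcof c hc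
  -- a set of `cof #X` indices is unbounded, since initial segments are smaller
  obtain ⟨s, hsB, hts⟩ : ∃ s ∈ B, t ≤ s := by
    by_contra! h
    have hBt := mk_le_mk_of_subset (show B ⊆ Iio t from h)
    rw [hBθ] at hBt
    exact hBt.not_gt (by simpa using mk_Iio_lt t)
  calc c < l t := ht
    _ ≤ l s := hl.monotone hts
    _ = #(Z s) := (hZ s hsB).symm
    _ ≤ #↥(⋃ t, Z t) := mk_le_mk_of_subset (subset_iUnion Z s)

theorem exists_hasDistinctDists {X : Set (Fin n → ℝ)} (hX : X.Infinite) :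
    ∃ Y ⊆ X, #Y = #X ∧ HasDistinctDists Y :=
  (isRegular_or_isSingular (infinite_iff.1 hX.to_subtype)).elim
    exists_hasDistinctDists_of_isRegular exists_hasDistinctDists_of_isSingular

end DistinctDistances

theorem stmt_14_general (n : ℕ) (X : Set (Fin n → ℝ)) (hX : X.Infinite) :
    ∃ Y ⊆ X, Cardinal.mk Y = Cardinal.mk X ∧
      IsIndependentIn (algEdges n 4 (erdosPoly n)) 4 Y := by
  obtain ⟨Y, hYX, hY, hYd⟩ := DistinctDistances.exists_hasDistinctDists hX
  exact ⟨Y, hYX, hY, hYd.isIndependentIn⟩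

/-- For every `n ≥ 1`, every infinite `X ⊆ ℝⁿ` has a subset `Y ⊆ X` with `|Y| = |X|` that is
independent for the algebraic 4-hypergraph defined by `pₙ(x,y,z,w) · qₙ(x,y,z)`. -/
theorem stmt_14 (n : ℕ) (hn : 1 ≤ n) (X : Set (Fin n → ℝ)) (hX : X.Infinite) :
    ∃ Y ⊆ X, Cardinal.mk Y = Cardinal.mk X ∧
      IsIndependentIn (algEdges n 4 (erdosPoly n)) 4 Y :=
  stmt_14_general n X hX
end
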